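/- arXiv:2512.21162 — 6 statements merged into one kernel-verified Lean document; each statement's English description precedes it below -/
import Mathlib

section
/- Let H be a norm on ℝⁿ that is differentiable on ℝⁿ\{0}. Then F := H^p/p is differentiable on all of ℝⁿ with ∇F(0) = 0, and the gradient map ∇F : ℝⁿ → ℝⁿ is continuous; that is, F is continuously differentiable on ℝⁿ. -/
/-!
`H` is a seminorm, hence convex and, in finite dimension, `C`-Lipschitz. So `|H ζ| ≤ C ‖ζ‖`,
`F = H ^ p / p` is `O(‖ζ‖ ^ p)` and has derivative `0` at the origin, while away from it
`dF ζ = H ζ ^ (p - 1) • dH ζ` has norm `O(‖ζ‖ ^ (p - 1)) → 0`. Continuity of `dH` off the origin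
comes from convexity: the derivatives are locally bounded, every cluster point `L` of `dH x` as
`x → x₀` inherits the subgradient inequality `L (y - x₀) ≤ H y - H x₀`, and at a point of
differentiability the only such `L` is `dH x₀`.
-/

open Filter Topology Asymptotics Set
open scoped NNReal

theorem Filter.Tendsto.mapClusterPt_prodMk {α X Y : Type*} [TopologicalSpace X]
    [TopologicalSpace Y] {l : Filter α} {u : α → X} {v : α → Y} {a : X} {b : Y}
    (hu : Tendsto u l (𝓝 a)) (hv : MapClusterPt b l v) :
    MapClusterPt (a, b) l fun x => (u x, v x) := by
  rw [((𝓝 a).basis_sets.prod_nhds (𝓝 b).basis_sets).mapClusterPt_iff_frequently]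
  rintro ⟨s, t⟩ ⟨hs, ht⟩
  exact ((mapClusterPt_iff_frequently.1 hv t ht).and_eventually (hu hs)).mono
    fun x hx => ⟨hx.2, hx.1⟩

section Convex

variable {E : Type*} [NormedAddCommGroup E] [NormedSpace ℝ E] {f : E → ℝ} {x₀ : E}

theorem ConvexOn.fderiv_apply_sub_le (hf : ConvexOn ℝ univ f) (hd : DifferentiableAt ℝ f x₀)
    (y : E) : fderiv ℝ f x₀ (y - x₀) ≤ f y - f x₀ := by
  let line : ℝ →ᵃ[ℝ] E := AffineMap.lineMap x₀ y
  have hline : HasDerivAt (f ∘ line) (fderiv ℝ f x₀ (y - x₀)) 0 := by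
    have hd' : HasFDerivAt f (fderiv ℝ f x₀) (line 0) := by simpa [line] using hd.hasFDerivAt
    exact hd'.comp_hasDerivAt 0 AffineMap.hasDerivAt_lineMap
  simpa [slope, line] using (hf.comp_affineMap line).le_slope_of_hasDerivAt
    (mem_univ 0) (mem_univ 1) zero_lt_one hline

theorem eq_fderiv_of_forall_apply_sub_le {L : E →L[ℝ] ℝ} (hd : DifferentiableAt ℝ f x₀)
    (hL : ∀ y, L (y - x₀) ≤ f y - f x₀) : L = fderiv ℝ f x₀ := by
  have hmin : IsLocalMin (fun y => f y - L y) x₀ :=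
    Eventually.of_forall fun y => by linarith [hL y, map_sub L y x₀]
  exact (sub_eq_zero.1 (hmin.hasFDerivAt_eq_zero (hd.hasFDerivAt.sub L.hasFDerivAt))).symm

theorem ConvexOn.continuousAt_fderiv [FiniteDimensional ℝ E] (hf : ConvexOn ℝ univ f)
    (hd : ∀ᶠ x in 𝓝 x₀, DifferentiableAt ℝ f x) : ContinuousAt (fderiv ℝ f) x₀ := by
  have hfc : Continuous f := continuousOn_univ.1 (hf.continuousOn isOpen_univ)
  obtain ⟨K, t, ht, hK⟩ := locallyLipschitzOn_univ.1 (hf.locallyLipschitzOn isOpen_univ) x₀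
  have hbound : ∀ᶠ x in 𝓝 x₀, fderiv ℝ f x ∈ Metric.closedBall 0 K := by
    filter_upwards [eventually_mem_nhds_iff.2 ht] with x hx
    exact mem_closedBall_zero_iff.2 (norm_fderiv_le_of_lipschitzOn ℝ hx hK)
  refine (isCompact_closedBall _ _).tendsto_nhds_of_unique_mapClusterPt hbound fun L _ hL => ?_
  refine eq_fderiv_of_forall_apply_sub_le hd.self_of_nhds fun y => ?_
  have hclosed : IsClosed {q : E × (E →L[ℝ] ℝ) | q.2 (y - q.1) ≤ f y - f q.1} :=
    isClosed_le (by fun_prop) (by fun_prop)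
  refine hclosed.mem_of_mapClusterPt (tendsto_id.mapClusterPt_prodMk hL) ?_
  filter_upwards [hd] with x hx using hf.fderiv_apply_sub_le hx y

theorem Seminorm.exists_lipschitzWith [FiniteDimensional ℝ E] (q : Seminorm ℝ E) :
    ∃ C, LipschitzWith C q := by
  obtain ⟨C, hC0, hC⟩ := q.bound_of_continuous_normedSpace
    (continuousOn_univ.1 (q.convexOn.continuousOn isOpen_univ))
  refine ⟨C.toNNReal, LipschitzWith.of_dist_le_mul fun x y => ?_⟩
  rw [Real.dist_eq, dist_eq_norm, Real.coe_toNNReal _ hC0.le]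
  exact (abs_sub_map_le_sub q x y).trans (hC _)

end Convex

section Power

variable {E : Type*} [NormedAddCommGroup E] {H : E → ℝ} {p : ℝ} {C : ℝ≥0}

theorem isLittleO_norm_rpow_nhds_zero (hp : 1 < p) :
    (fun x : E => ‖x‖ ^ p) =o[𝓝 0] fun x => x := by
  have hp1 : 0 < p - 1 := sub_pos.2 hp
  have hsmall : (fun x : E => ‖x‖ ^ (p - 1)) =o[𝓝 0] fun _ => (1 : ℝ) := by
    refine (isLittleO_one_iff ℝ).2 ?_
    simpa [hp1.ne'] using (continuous_norm.rpow_const fun _ => Or.inr hp1.le).tendsto (0 : E)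
  have hsplit : (fun x : E => ‖x‖ ^ p) = fun x => ‖x‖ * ‖x‖ ^ (p - 1) := by
    ext x
    rw [← Real.rpow_one_add' (norm_nonneg x) (by positivity)]
    ring_nf
  have hprod := (isBigO_refl (fun x : E => ‖x‖) (𝓝 0)).mul_isLittleO hsmall
  simp only [mul_one] at hprod
  rw [hsplit]
  exact hprod.trans_isBigO (isBigO_norm_left.2 (isBigO_refl _ _))

variable [NormedSpace ℝ E]

theorem hasFDerivAt_rpow_div_zero (hp : 1 < p) (hlip : LipschitzWith C H) (h0 : H 0 = 0) :
    HasFDerivAt (fun ζ => H ζ ^ p / p) (0 : E →L[ℝ] ℝ) 0 := by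
  have hp0 : 0 < p := zero_lt_one.trans hp
  have hbound : ∀ ζ : E, ‖H ζ ^ p / p‖ ≤ C ^ p / p * ‖‖ζ‖ ^ p‖ := fun ζ => by
    have hHζ : |H ζ| ≤ C * ‖ζ‖ := hlip.norm_le_mul h0 ζ
    calc ‖H ζ ^ p / p‖ = |H ζ ^ p| / p := by rw [Real.norm_eq_abs, abs_div, abs_of_pos hp0]
      _ ≤ (C * ‖ζ‖) ^ p / p := by
        gcongr
        exact (Real.abs_rpow_le_abs_rpow _ _).trans (by gcongr)
      _ = C ^ p / p * ‖‖ζ‖ ^ p‖ := by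
        rw [Real.mul_rpow C.coe_nonneg (norm_nonneg ζ), Real.norm_of_nonneg (by positivity)]
        ring
  refine .of_isLittleO ?_
  simpa [h0, Real.zero_rpow hp0.ne'] using
    (IsBigO.of_bound _ (Eventually.of_forall hbound)).trans_isLittleO
      (isLittleO_norm_rpow_nhds_zero hp)

theorem hasFDerivAt_rpow_div (hp : 1 ≤ p) {ζ : E} (hd : DifferentiableAt ℝ H ζ) :
    HasFDerivAt (fun ζ => H ζ ^ p / p) (H ζ ^ (p - 1) • fderiv ℝ H ζ) ζ := by
  have hp0 : p ≠ 0 := (zero_lt_one.trans_le hp).ne'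
  have hg : HasDerivAt (fun t : ℝ => t ^ p / p) (H ζ ^ (p - 1)) (H ζ) := by
    simpa [mul_div_assoc, mul_div_cancel_left₀ _ hp0] using
      (Real.hasDerivAt_rpow_const (Or.inr hp)).div_const p
  exact hg.comp_hasFDerivAt ζ hd.hasFDerivAt

theorem differentiable_rpow_div (hp : 1 < p) (hlip : LipschitzWith C H) (h0 : H 0 = 0)
    (hd : ∀ ζ, ζ ≠ 0 → DifferentiableAt ℝ H ζ) :
    Differentiable ℝ fun ζ => H ζ ^ p / p := fun ζ => by
  rcases eq_or_ne ζ 0 with rfl | hζ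
  exacts [(hasFDerivAt_rpow_div_zero hp hlip h0).differentiableAt,
    (hasFDerivAt_rpow_div hp.le (hd ζ hζ)).differentiableAt]

theorem norm_fderiv_rpow_div_le (hp : 1 < p) (hlip : LipschitzWith C H) (h0 : H 0 = 0)
    (hd : ∀ ζ, ζ ≠ 0 → DifferentiableAt ℝ H ζ) (ζ : E) :
    ‖fderiv ℝ (fun ζ => H ζ ^ p / p) ζ‖ ≤ (C * ‖ζ‖) ^ (p - 1) * C := by
  rcases eq_or_ne ζ 0 with rfl | hζ
  · rw [(hasFDerivAt_rpow_div_zero hp hlip h0).fderiv, norm_zero]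
    positivity
  rw [(hasFDerivAt_rpow_div hp.le (hd ζ hζ)).fderiv, norm_smul]
  gcongr
  · exact (Real.abs_rpow_le_abs_rpow _ _).trans
      (Real.rpow_le_rpow (abs_nonneg _) (hlip.norm_le_mul h0 ζ) (sub_pos.2 hp).le)
  · exact norm_fderiv_le_of_lipschitz ℝ hlip

theorem continuous_fderiv_rpow_div (hp : 1 < p) (hlip : LipschitzWith C H) (h0 : H 0 = 0)
    (hd : ∀ ζ, ζ ≠ 0 → DifferentiableAt ℝ H ζ)
    (hc : ∀ ζ, ζ ≠ 0 → ContinuousAt (fderiv ℝ H) ζ) :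
    Continuous (fderiv ℝ fun ζ => H ζ ^ p / p) := continuous_iff_continuousAt.2 fun ζ => by
  rcases eq_or_ne ζ 0 with rfl | hζ
  · rw [ContinuousAt, (hasFDerivAt_rpow_div_zero hp hlip h0).fderiv]
    refine squeeze_zero_norm (norm_fderiv_rpow_div_le hp hlip h0 hd) ?_
    have hp1 : 0 < p - 1 := sub_pos.2 hp
    have hcont : Continuous fun ζ : E => (C * ‖ζ‖) ^ (p - 1) * C :=
      ((continuous_const.mul continuous_norm).rpow_const fun _ => Or.inr hp1.le).mul
        continuous_const
    simpa [hp1.ne'] using hcont.tendsto 0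
  have heq : (fun ξ => H ξ ^ (p - 1) • fderiv ℝ H ξ) =ᶠ[𝓝 ζ] fderiv ℝ fun ζ => H ζ ^ p / p := by
    filter_upwards [isOpen_ne.mem_nhds hζ] with ξ hξ
    exact ((hasFDerivAt_rpow_div hp.le (hd ξ hξ)).fderiv).symm
  exact ((hlip.continuous.continuousAt.rpow_const (Or.inr (sub_pos.2 hp).le)).smul
    (hc ζ hζ)).congr heq

end Power

theorem stmt_6_general (n : ℕ) (p : ℝ) (hp : 1 < p)
    (H : EuclideanSpace ℝ (Fin n) → ℝ)
    (Hhom : ∀ (c : ℝ) (ξ : EuclideanSpace ℝ (Fin n)), H (c • ξ) = |c| * H ξ)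
    (Htri : ∀ ξ η, H (ξ + η) ≤ H ξ + H η)
    (Hdiff : ∀ ξ : EuclideanSpace ℝ (Fin n), ξ ≠ 0 → DifferentiableAt ℝ H ξ) :
    Differentiable ℝ (fun ζ : EuclideanSpace ℝ (Fin n) => H ζ ^ p / p) ∧
      gradient (fun ζ : EuclideanSpace ℝ (Fin n) => H ζ ^ p / p) 0 = 0 ∧
      Continuous (gradient (fun ζ : EuclideanSpace ℝ (Fin n) => H ζ ^ p / p)) := by
  let q : Seminorm ℝ (EuclideanSpace ℝ (Fin n)) := Seminorm.of H Htri Hhom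
  obtain ⟨C, hlip⟩ : ∃ C, LipschitzWith C H := q.exists_lipschitzWith
  have h0 : H 0 = 0 := map_zero q
  have hcont : ∀ ξ, ξ ≠ 0 → ContinuousAt (fderiv ℝ H) ξ := fun ξ hξ =>
    q.convexOn.continuousAt_fderiv ((eventually_ne_nhds hξ).mono Hdiff)
  refine ⟨differentiable_rpow_div hp hlip h0 Hdiff, ?_, ?_⟩
  · rw [gradient, (hasFDerivAt_rpow_div_zero hp hlip h0).fderiv, map_zero]
  · exact (InnerProductSpace.toDual ℝ _).symm.continuous.comp
      (continuous_fderiv_rpow_div hp hlip h0 Hdiff hcont)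

/-- For a norm `H` differentiable off the origin, `F := H^p/p`
is differentiable on all of `ℝⁿ`, `∇F(0) = 0`, and `∇F` is continuous; i.e. `F`
is continuously differentiable on `ℝⁿ`. -/
theorem stmt_6 (n : ℕ) (hn : 2 ≤ n) (p : ℝ) (hp : 1 < p)
    (H : EuclideanSpace ℝ (Fin n) → ℝ)
    (Hnonneg : ∀ ξ, 0 ≤ H ξ)
    (Heq_zero : ∀ ξ, H ξ = 0 ↔ ξ = 0)
    (Hhom : ∀ (c : ℝ) (ξ : EuclideanSpace ℝ (Fin n)), H (c • ξ) = |c| * H ξ)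
    (Htri : ∀ ξ η, H (ξ + η) ≤ H ξ + H η)
    (Hdiff : ∀ ξ : EuclideanSpace ℝ (Fin n), ξ ≠ 0 → DifferentiableAt ℝ H ξ) :
    Differentiable ℝ (fun ζ : EuclideanSpace ℝ (Fin n) => H ζ ^ p / p) ∧
      gradient (fun ζ : EuclideanSpace ℝ (Fin n) => H ζ ^ p / p) 0 = 0 ∧
      Continuous (gradient (fun ζ : EuclideanSpace ℝ (Fin n) => H ζ ^ p / p)) :=
  stmt_6_general n p hp H Hhom Htri Hdiff
end

section
/- Let A be a symmetric positive definite real n×n matrix and |ξ|_A := √⟪Aξ, ξ⟫. There exist constants c, C > 0 depending only on p such that for all ξ, η ∈ ℝⁿ with (ξ,η) ≠ (0,0): c·|η|_A²·(|η|_A + |ξ|_A)^{p−2} ≤ |ξ+η|_A^p − |ξ|_A^p − p·|ξ|_A^{p−2}·⟪Aξ, η⟫ ≤ C·|η|_A²·(|η|_A + |ξ|_A)^{p−2}, where the term |ξ|_A^{p−2}·⟪Aξ, η⟫ is interpreted as 0 when ξ = 0. -/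
open scoped Classical

open Matrix

/-!
With `s = |ξ|_A`, `t = |η|_A`, `r = |ξ + η|_A` one has `⟪Aξ, η⟫ = (r² - s² - t²)/2`, so the
divergence equals `B(r, s) + (p/2) s^(p-2) (t² - (r - s)²)`, where
`B(r, s) = r^p - s^p - p s^(p-1) (r - s)` is the Bregman divergence of `x ↦ x^p` on `[0, ∞)`;
both terms are nonnegative since `|r - s| ≤ t ≤ r + s`. Only this triangle geometry is used.

If `t ≤ s/2`, then `r` and `s` lie in `[s/2, 3s/2]`, where `(x^p)'' = p(p-1)x^(p-2)` is comparable
to `(s + t)^(p-2)`, and Taylor's formula gives both bounds. If `t ≥ s/2`, the right-hand side is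
comparable to `t^p`; the upper bound is then crude, and for the lower bound either `|r - s| ≤ t/2`,
so that the second term is of size `s^(p-2) t²`, or `|r - s| ≥ t/2` and `B(r, s)` alone suffices:
by Taylor's formula when `p ≤ 2`, and when `p ≥ 2` by splitting `[s, r]` at its midpoint and
using the superadditivity of `x^(p-1)`.
-/

open Set

theorem ConvexOn.add_mul_sub_le_of_hasDerivAt {S : Set ℝ} {f : ℝ → ℝ} {f' a b : ℝ}
    (hf : ConvexOn ℝ S f) (ha : a ∈ S) (hb : b ∈ S) (hf' : HasDerivAt f f' a) :
    f a + f' * (b - a) ≤ f b := by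
  rcases lt_trichotomy a b with hab | rfl | hba
  · have := hf.le_slope_of_hasDerivAt ha hb hab hf'
    rw [slope_def_field, le_div_iff₀ (sub_pos.2 hab)] at this
    linarith
  · simp
  · have := hf.slope_le_of_hasDerivAt hb ha hba hf'
    rw [slope_def_field, div_le_iff₀ (sub_pos.2 hba)] at this
    linarith

theorem le_sub_sub_mul_sub_of_le_deriv2 {f f' f'' : ℝ → ℝ} {a b m : ℝ}
    (hf : ContinuousOn f (uIcc a b)) (ha : HasDerivAt f (f' a) a)
    (hf' : ∀ x ∈ Ioo (min a b) (max a b), HasDerivAt f (f' x) x)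
    (hf'' : ∀ x ∈ Ioo (min a b) (max a b), HasDerivAt f' (f'' x) x)
    (hm : ∀ x ∈ Ioo (min a b) (max a b), m ≤ f'' x) :
    m / 2 * (b - a) ^ 2 ≤ f b - f a - f' a * (b - a) := by
  have hint : interior (uIcc a b) = Ioo (min a b) (max a b) := interior_Icc
  have hquad : ∀ x, HasDerivAt (fun y => m / 2 * (y - a) ^ 2) (m * (x - a)) x := fun x =>
    ((((hasDerivAt_id' x).sub_const a).fun_pow 2).const_mul (m / 2)).congr_deriv
      (by push_cast; ring)
  have hconv : ConvexOn ℝ (uIcc a b) (fun x => f x - m / 2 * (x - a) ^ 2) := by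
    refine convexOn_of_hasDerivWithinAt2_nonneg (convex_uIcc a b)
      (hf.sub (by fun_prop)) (f' := fun x => f' x - m * (x - a)) (f'' := fun x => f'' x - m)
      ?_ ?_ ?_ <;> rw [hint] <;> intro x hx
    · exact ((hf' x hx).sub (hquad x)).hasDerivWithinAt
    · exact ((hf'' x hx).sub (((hasDerivAt_id x).sub_const a).const_mul m) |>.congr_deriv
        (by simp)).hasDerivWithinAt
    · exact sub_nonneg.2 (hm x hx)
  have := hconv.add_mul_sub_le_of_hasDerivAt left_mem_uIcc right_mem_uIcc
    (f' := f' a - m * (a - a)) (ha.sub (hquad a))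
  simp only [sub_self, mul_zero, sub_zero, zero_pow two_ne_zero] at this
  linarith

theorem sub_sub_mul_sub_le_of_deriv2_le {f f' f'' : ℝ → ℝ} {a b M : ℝ}
    (hf : ContinuousOn f (uIcc a b)) (ha : HasDerivAt f (f' a) a)
    (hf' : ∀ x ∈ Ioo (min a b) (max a b), HasDerivAt f (f' x) x)
    (hf'' : ∀ x ∈ Ioo (min a b) (max a b), HasDerivAt f' (f'' x) x)
    (hM : ∀ x ∈ Ioo (min a b) (max a b), f'' x ≤ M) :
    f b - f a - f' a * (b - a) ≤ M / 2 * (b - a) ^ 2 := by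
  have := le_sub_sub_mul_sub_of_le_deriv2 (f := -f) (f' := -f') (f'' := -f'') (m := -M) hf.neg
    ha.neg (fun x hx => (hf' x hx).neg) (fun x hx => (hf'' x hx).neg)
    (fun x hx => neg_le_neg (hM x hx))
  simp only [Pi.neg_apply] at this
  linarith

theorem Real.rpow_le_rpow_mul_of_le_mul {x y k a : ℝ} (hx : 0 < x) (hy : 0 < y) (hxy : x ≤ k * y)
    (hyx : y ≤ k * x) : x ^ a ≤ k ^ |a| * y ^ a := by
  have hratio : (x / y) ^ a ≤ k ^ |a| := by
    rcases le_or_gt 0 a with ha | ha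
    · rw [abs_of_nonneg ha]
      exact Real.rpow_le_rpow (by positivity) ((div_le_iff₀ hy).2 hxy) ha
    · rw [abs_of_neg ha, ← inv_div, Real.inv_rpow (by positivity), ← Real.rpow_neg (by positivity)]
      exact Real.rpow_le_rpow (by positivity) ((div_le_iff₀ hx).2 hyx) (by linarith)
  calc x ^ a = (x / y) ^ a * y ^ a := by
        rw [Real.div_rpow hx.le hy.le, div_mul_cancel₀ _ (Real.rpow_pos_of_pos hy a).ne']
    _ ≤ k ^ |a| * y ^ a := by gcongr

theorem Real.rpow_eq_sq_mul_rpow_sub_two {x p : ℝ} (hx : 0 ≤ x) (hp : p ≠ 0) :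
    x ^ p = x ^ 2 * x ^ (p - 2) := by
  have := Real.rpow_add_natCast' (y := p - 2) (n := 2) hx (by push_cast; simpa using hp)
  push_cast at this
  rw [sub_add_cancel] at this
  rw [this, mul_comm]

noncomputable def rpowBregman (p r s : ℝ) : ℝ := r ^ p - s ^ p - p * s ^ (p - 1) * (r - s)

section RpowBregman

variable {p r s : ℝ}

theorem hasDerivAt_const_mul_rpow_sub_one {x : ℝ} (hx : x ≠ 0) :
    HasDerivAt (fun y : ℝ => p * y ^ (p - 1)) (p * (p - 1) * x ^ (p - 2)) x :=
  ((Real.hasDerivAt_rpow_const (Or.inl hx)).const_mul p).congr_deriv (by ring_nf)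

theorem pos_of_mem_Ioo_min_max (hr : 0 ≤ r) (hs : 0 < s) {x : ℝ}
    (hx : x ∈ Ioo (min s r) (max s r)) : 0 < x :=
  lt_of_le_of_lt (le_min hs.le hr) hx.1

theorem le_rpowBregman_of_le_deriv2 (hp : 0 < p) (hr : 0 ≤ r) (hs : 0 < s) {m : ℝ}
    (hm : ∀ x ∈ Ioo (min s r) (max s r), m ≤ p * (p - 1) * x ^ (p - 2)) :
    m / 2 * (r - s) ^ 2 ≤ rpowBregman p r s :=
  le_sub_sub_mul_sub_of_le_deriv2 (Real.continuous_rpow_const hp.le).continuousOn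
    (Real.hasDerivAt_rpow_const (Or.inl hs.ne'))
    (fun _ hx => Real.hasDerivAt_rpow_const (Or.inl (pos_of_mem_Ioo_min_max hr hs hx).ne'))
    (fun _ hx => hasDerivAt_const_mul_rpow_sub_one (pos_of_mem_Ioo_min_max hr hs hx).ne') hm

theorem rpowBregman_le_of_deriv2_le (hp : 0 < p) (hr : 0 ≤ r) (hs : 0 < s) {M : ℝ}
    (hM : ∀ x ∈ Ioo (min s r) (max s r), p * (p - 1) * x ^ (p - 2) ≤ M) :
    rpowBregman p r s ≤ M / 2 * (r - s) ^ 2 :=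
  sub_sub_mul_sub_le_of_deriv2_le (Real.continuous_rpow_const hp.le).continuousOn
    (Real.hasDerivAt_rpow_const (Or.inl hs.ne'))
    (fun _ hx => Real.hasDerivAt_rpow_const (Or.inl (pos_of_mem_Ioo_min_max hr hs hx).ne'))
    (fun _ hx => hasDerivAt_const_mul_rpow_sub_one (pos_of_mem_Ioo_min_max hr hs hx).ne') hM

theorem rpowBregman_nonneg (hp : 1 ≤ p) (hr : 0 ≤ r) (hs : 0 < s) : 0 ≤ rpowBregman p r s := by
  have hm : ∀ x ∈ Ioo (min s r) (max s r), 0 ≤ p * (p - 1) * x ^ (p - 2) := fun x hx =>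
    mul_nonneg (mul_nonneg (by linarith) (by linarith))
      (Real.rpow_nonneg (pos_of_mem_Ioo_min_max hr hs hx).le _)
  simpa using le_rpowBregman_of_le_deriv2 (by linarith) hr hs hm

theorem le_rpowBregman_of_le_two (hp₁ : 1 ≤ p) (hp₂ : p ≤ 2) (hr : 0 ≤ r) (hs : 0 < s) :
    p * (p - 1) / 2 * (r - s) ^ 2 * (r + s) ^ (p - 2) ≤ rpowBregman p r s := by
  have hm : ∀ x ∈ Ioo (min s r) (max s r),
      p * (p - 1) * (r + s) ^ (p - 2) ≤ p * (p - 1) * x ^ (p - 2) := fun x hx =>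
    mul_le_mul_of_nonneg_left (Real.rpow_le_rpow_of_nonpos (pos_of_mem_Ioo_min_max hr hs hx)
        (hx.2.le.trans (max_le (by linarith) (by linarith))) (by linarith))
      (mul_nonneg (by linarith) (by linarith))
  calc p * (p - 1) / 2 * (r - s) ^ 2 * (r + s) ^ (p - 2)
      = p * (p - 1) * (r + s) ^ (p - 2) / 2 * (r - s) ^ 2 := by ring
    _ ≤ rpowBregman p r s := le_rpowBregman_of_le_deriv2 (by linarith) hr hs hm

theorem abs_sub_rpow_succ_le {q a b : ℝ} (hq : 1 ≤ q) (ha : 0 ≤ a) (hb : 0 ≤ b) :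
    |a - b| ^ (q + 1) ≤ (a ^ q - b ^ q) * (a - b) := by
  wlog hba : b ≤ a generalizing a b
  · rw [abs_sub_comm]
    exact (this hb ha (le_of_not_ge hba)).trans_eq (by ring)
  have hsuper : b ^ q + (a - b) ^ q ≤ a ^ q := by
    simpa using Real.add_rpow_le_rpow_add hb (sub_nonneg.2 hba) hq
  rw [abs_of_nonneg (sub_nonneg.2 hba), Real.rpow_add_one' (sub_nonneg.2 hba) (by linarith)]
  exact mul_le_mul_of_nonneg_right (by linarith) (sub_nonneg.2 hba)

theorem le_rpowBregman_of_two_le (hp : 2 ≤ p) (hr : 0 ≤ r) (hs : 0 < s) :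
    p * |r - s| ^ p / 2 ^ p ≤ rpowBregman p r s := by
  set m := (r + s) / 2
  have hm : 0 < m := by positivity
  -- Splitting the interval at its midpoint leaves a positive cross term.
  have hsplit : rpowBregman p r s = rpowBregman p r m + rpowBregman p m s
      + p * ((m ^ (p - 1) - s ^ (p - 1)) * (m - s)) := by
    simp only [rpowBregman, m]; ring
  have hcross := abs_sub_rpow_succ_le (q := p - 1) (by linarith) hm.le hs.le
  have hms : |m - s| = |r - s| / 2 := by
    rw [show m - s = (r - s) / 2 by ring, abs_div, abs_two]
  rw [sub_add_cancel, hms, Real.div_rpow (abs_nonneg _) zero_le_two] at hcross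
  have := rpowBregman_nonneg (p := p) (by linarith) hr hm
  have := rpowBregman_nonneg (p := p) (by linarith) hm.le hs
  have := mul_le_mul_of_nonneg_left hcross (by linarith : (0 : ℝ) ≤ p)
  rw [hsplit, mul_div_assoc]
  linarith

end RpowBregman

section Triangle

variable {p r s t : ℝ}

/-- The quantity `|ξ + η|^p - |ξ|^p - p |ξ|^(p-2) ⟪ξ, η⟫` in terms of the side lengths
`r = |ξ + η|`, `s = |ξ|`, `t = |η|` of the triangle spanned by `ξ` and `η`. -/
noncomputable def triangleBregman (p r s t : ℝ) : ℝ :=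
  r ^ p - s ^ p - p * (s ^ (p - 2) * ((r ^ 2 - s ^ 2 - t ^ 2) / 2))

theorem triangleBregman_eq (hs : 0 < s) :
    triangleBregman p r s t = rpowBregman p r s + p / 2 * s ^ (p - 2) * (t ^ 2 - (r - s) ^ 2) := by
  have : s ^ (p - 1) = s ^ (p - 2) * s := by
    rw [← Real.rpow_add_one hs.ne']; ring_nf
  simp only [triangleBregman, rpowBregman, this]
  ring

theorem rpowBregman_le_triangleBregman (hp : 0 ≤ p) (hs : 0 < s) (hrs : |r - s| ≤ t) :
    rpowBregman p r s ≤ triangleBregman p r s t := by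
  have : (r - s) ^ 2 ≤ t ^ 2 := sq_le_sq' (abs_le.1 hrs).1 (abs_le.1 hrs).2
  rw [triangleBregman_eq hs]
  exact le_add_of_nonneg_right <| mul_nonneg (mul_nonneg (by linarith)
    (Real.rpow_nonneg hs.le _)) (by linarith)

theorem rpow_sub_two_comparable_of_near (hs : 0 < s) (hrs : |r - s| ≤ t) (hts : t ≤ s / 2)
    {x : ℝ} (hx : x ∈ Icc (min s r) (max s r)) :
    (s + t) ^ (p - 2) ≤ 3 ^ |p - 2| * x ^ (p - 2) ∧
      x ^ (p - 2) ≤ 3 ^ |p - 2| * (s + t) ^ (p - 2) := by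
  obtain ⟨hrs₁, hrs₂⟩ := abs_le.1 hrs
  have hx₁ : s / 2 ≤ x := (le_min (by linarith) (by linarith)).trans hx.1
  have hx₂ : x ≤ 3 * s / 2 := hx.2.trans (max_le (by linarith) (by linarith))
  exact ⟨Real.rpow_le_rpow_mul_of_le_mul (by linarith) (by linarith) (by linarith) (by linarith),
    Real.rpow_le_rpow_mul_of_le_mul (by linarith) (by linarith) (by linarith) (by linarith)⟩

theorem le_triangleBregman_of_near (hp : 1 < p) (hs : 0 < s) (hrs : |r - s| ≤ t)
    (hts : t ≤ s / 2) :
    p * min (p - 1) 1 / (2 * 3 ^ |p - 2|) * (t ^ 2 * (s + t) ^ (p - 2))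
      ≤ triangleBregman p r s t := by
  set X := (s + t) ^ (p - 2)
  set K : ℝ := 3 ^ |p - 2|
  have hr : 0 ≤ r := by linarith [(abs_le.1 hrs).1]
  have ht : 0 ≤ t := (abs_nonneg _).trans hrs
  have hK : 0 < K := by positivity
  have hweight : ∀ x ∈ Icc (min s r) (max s r), X / K ≤ x ^ (p - 2) := fun x hx =>
    (div_le_iff₀' hK).2 (rpow_sub_two_comparable_of_near hs hrs hts hx).1
  have hB := le_rpowBregman_of_le_deriv2 (p := p) (m := p * (p - 1) * (X / K)) (by linarith) hr hs
    fun x hx => mul_le_mul_of_nonneg_left (hweight x (Ioo_subset_Icc_self hx))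
      (mul_nonneg (by linarith) (by linarith))
  have hsX := hweight s ⟨min_le_left _ _, le_max_left _ _⟩
  have ha : (r - s) ^ 2 ≤ t ^ 2 := sq_le_sq' (abs_le.1 hrs).1 (abs_le.1 hrs).2
  have hmin : min (p - 1) 1 * t ^ 2 ≤ (p - 1) * (r - s) ^ 2 + (t ^ 2 - (r - s) ^ 2) := by
    nlinarith [min_le_left (p - 1) 1, min_le_right (p - 1) 1, sq_nonneg (r - s)]
  rw [triangleBregman_eq hs]
  calc p * min (p - 1) 1 / (2 * K) * (t ^ 2 * X)
      = p / 2 * (X / K) * (min (p - 1) 1 * t ^ 2) := by field_simp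
    _ ≤ p / 2 * (X / K) * ((p - 1) * (r - s) ^ 2 + (t ^ 2 - (r - s) ^ 2)) := by gcongr
    _ = p * (p - 1) * (X / K) / 2 * (r - s) ^ 2 + p / 2 * (X / K) * (t ^ 2 - (r - s) ^ 2) := by
      ring
    _ ≤ rpowBregman p r s + p / 2 * s ^ (p - 2) * (t ^ 2 - (r - s) ^ 2) := by gcongr

theorem triangleBregman_le_of_near (hp : 1 < p) (hs : 0 < s) (hrs : |r - s| ≤ t)
    (hts : t ≤ s / 2) :
    triangleBregman p r s t ≤ p ^ 2 * 3 ^ |p - 2| / 2 * (t ^ 2 * (s + t) ^ (p - 2)) := by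
  set X := (s + t) ^ (p - 2)
  set K : ℝ := 3 ^ |p - 2|
  have hr : 0 ≤ r := by linarith [(abs_le.1 hrs).1]
  have ht : 0 ≤ t := (abs_nonneg _).trans hrs
  have hB := rpowBregman_le_of_deriv2_le (p := p) (M := p * (p - 1) * (K * X)) (by linarith) hr hs
    fun x hx => mul_le_mul_of_nonneg_left
      (rpow_sub_two_comparable_of_near hs hrs hts (Ioo_subset_Icc_self hx)).2
      (mul_nonneg (by linarith) (by linarith))
  have hsX := (rpow_sub_two_comparable_of_near (p := p) hs hrs hts
    ⟨min_le_left s r, le_max_left s r⟩).2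
  have ha : (r - s) ^ 2 ≤ t ^ 2 := sq_le_sq' (abs_le.1 hrs).1 (abs_le.1 hrs).2
  have hmax : (p - 1) * (r - s) ^ 2 + (t ^ 2 - (r - s) ^ 2) ≤ p * t ^ 2 := by
    rcases le_total p 2 with h | h <;> nlinarith [sq_nonneg (r - s)]
  rw [triangleBregman_eq hs]
  calc rpowBregman p r s + p / 2 * s ^ (p - 2) * (t ^ 2 - (r - s) ^ 2)
      ≤ p * (p - 1) * (K * X) / 2 * (r - s) ^ 2 + p / 2 * (K * X) * (t ^ 2 - (r - s) ^ 2) := by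
        gcongr
    _ = p / 2 * (K * X) * ((p - 1) * (r - s) ^ 2 + (t ^ 2 - (r - s) ^ 2)) := by ring
    _ ≤ p / 2 * (K * X) * (p * t ^ 2) := by gcongr
    _ = p ^ 2 * K / 2 * (t ^ 2 * X) := by ring

theorem triangleBregman_le_far (hp : 1 < p) (hr : 0 ≤ r) (hs : 0 < s) (hrs : |r - s| ≤ t)
    (htr : t ≤ r + s) (hst : s ≤ 2 * t) :
    triangleBregman p r s t ≤ 9 * (1 + p) * (t ^ 2 * (s + t) ^ (p - 2)) := by
  obtain ⟨hrs₁, hrs₂⟩ := abs_le.1 hrs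
  have ht : 0 ≤ t := (abs_nonneg _).trans hrs
  set X := (s + t) ^ (p - 2)
  have hX : 0 ≤ X := Real.rpow_nonneg (by linarith) _
  have hu : -(s * t) ≤ (r ^ 2 - s ^ 2 - t ^ 2) / 2 := by nlinarith
  have hsp : s ^ (p - 2) * s = s ^ (p - 1) := by
    rw [← Real.rpow_add_one hs.ne']; ring_nf
  have hrp : r ^ p ≤ (s + t) ^ 2 * X := by
    rw [← Real.rpow_eq_sq_mul_rpow_sub_two (by linarith) (by linarith)]
    exact Real.rpow_le_rpow hr (by linarith) (by linarith)
  have hsp' : s ^ (p - 1) ≤ (s + t) * X := by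
    rw [show (s + t) * X = (s + t) ^ (p - 1) by
      rw [mul_comm, ← Real.rpow_add_one (by linarith)]; ring_nf]
    exact Real.rpow_le_rpow hs.le (by linarith) (by linarith)
  calc triangleBregman p r s t
      ≤ r ^ p + p * (s ^ (p - 2) * s) * t := by
        have := mul_le_mul_of_nonneg_left hu (mul_nonneg (by linarith : (0 : ℝ) ≤ p)
          (Real.rpow_nonneg hs.le (p - 2)))
        have := Real.rpow_nonneg hs.le p
        simp only [triangleBregman]
        nlinarith
    _ ≤ (s + t) ^ 2 * X + p * ((s + t) * X) * t := by
        rw [hsp]; gcongr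
    _ ≤ (3 * t) ^ 2 * X + p * ((3 * t) * X) * t := by
        gcongr <;> linarith
    _ ≤ 9 * (1 + p) * (t ^ 2 * X) := by
        nlinarith [mul_nonneg (by linarith : (0 : ℝ) ≤ p) (mul_nonneg (sq_nonneg t) hX)]

theorem le_triangleBregman_of_abs_sub_le_half (hp : 1 < p) (hr : 0 ≤ r) (hs : 0 < s)
    (hrs : |r - s| ≤ t / 2) (htr : t ≤ r + s) :
    3 * p / (8 * 5 ^ |p - 2|) * (t ^ 2 * (s + t) ^ (p - 2)) ≤ triangleBregman p r s t := by
  obtain ⟨hrs₁, hrs₂⟩ := abs_le.1 hrs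
  have ht : 0 ≤ t := by linarith [abs_nonneg (r - s)]
  set X := (s + t) ^ (p - 2)
  set K : ℝ := 5 ^ |p - 2|
  have hK : 0 < K := by positivity
  have hsX : X / K ≤ s ^ (p - 2) :=
    (div_le_iff₀' hK).2
      (Real.rpow_le_rpow_mul_of_le_mul (by positivity) hs (by linarith) (by linarith))
  have ha : (r - s) ^ 2 ≤ t ^ 2 / 4 := by nlinarith
  have hB := rpowBregman_nonneg (p := p) hp.le hr hs
  rw [triangleBregman_eq hs]
  calc 3 * p / (8 * K) * (t ^ 2 * X) = p / 2 * (X / K) * (3 / 4 * t ^ 2) := by field_simp; ring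
    _ ≤ p / 2 * s ^ (p - 2) * (t ^ 2 - (r - s) ^ 2) := by gcongr; linarith
    _ ≤ rpowBregman p r s + p / 2 * s ^ (p - 2) * (t ^ 2 - (r - s) ^ 2) := by linarith

theorem le_triangleBregman_of_le_two (hp₁ : 1 < p) (hp₂ : p ≤ 2) (hr : 0 ≤ r) (hs : 0 < s)
    (hrs : |r - s| ≤ t) (hrs' : t / 2 ≤ |r - s|) :
    p * (p - 1) / 16 * (t ^ 2 * (s + t) ^ (p - 2)) ≤ triangleBregman p r s t := by
  obtain ⟨hrs₁, hrs₂⟩ := abs_le.1 hrs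
  have ht : 0 ≤ t := (abs_nonneg _).trans hrs
  set X := (s + t) ^ (p - 2)
  have hX : 0 ≤ X := Real.rpow_nonneg (by positivity) _
  have ha : t ^ 2 / 4 ≤ (r - s) ^ 2 := by
    rw [← sq_abs (r - s)]; nlinarith
  have htwo : 1 / 2 ≤ (2 : ℝ) ^ (p - 2) := by
    rw [← Real.rpow_neg_one 2 |>.trans (one_div 2).symm]
    exact Real.rpow_le_rpow_of_exponent_le one_le_two (by linarith)
  have hY : X / 2 ≤ (r + s) ^ (p - 2) := by
    calc X / 2 ≤ (2 : ℝ) ^ (p - 2) * X := by nlinarith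
      _ = (2 * (s + t)) ^ (p - 2) := (Real.mul_rpow zero_le_two (by positivity)).symm
      _ ≤ (r + s) ^ (p - 2) := Real.rpow_le_rpow_of_nonpos (by positivity) (by linarith)
          (by linarith)
  calc p * (p - 1) / 16 * (t ^ 2 * X) = p * (p - 1) / 2 * (t ^ 2 / 4) * (X / 2) := by ring
    _ ≤ p * (p - 1) / 2 * (r - s) ^ 2 * (r + s) ^ (p - 2) := by gcongr
    _ ≤ rpowBregman p r s := le_rpowBregman_of_le_two hp₁.le hp₂ hr hs
    _ ≤ triangleBregman p r s t := rpowBregman_le_triangleBregman (by linarith) hs hrs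

theorem le_triangleBregman_of_two_le (hp : 2 ≤ p) (hr : 0 ≤ r) (hs : 0 < s)
    (hrs : |r - s| ≤ t) (hrs' : t / 2 ≤ |r - s|) (hst : s ≤ 2 * t) :
    p / (4 ^ p * 3 ^ (p - 2)) * (t ^ 2 * (s + t) ^ (p - 2)) ≤ triangleBregman p r s t := by
  have ht : 0 ≤ t := (abs_nonneg _).trans hrs
  have hX : t ^ 2 * (s + t) ^ (p - 2) ≤ 3 ^ (p - 2) * t ^ p := by
    calc t ^ 2 * (s + t) ^ (p - 2) ≤ t ^ 2 * (3 * t) ^ (p - 2) := by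
          gcongr; linarith
      _ = 3 ^ (p - 2) * t ^ p := by
          rw [Real.mul_rpow zero_le_three ht,
            Real.rpow_eq_sq_mul_rpow_sub_two (p := p) ht (by linarith)]
          ring
  have hbound : p * (t / 2) ^ p / 2 ^ p ≤ p * |r - s| ^ p / 2 ^ p := by
    gcongr
  have h4 : p * (t / 2) ^ p / 2 ^ p = p * t ^ p / 4 ^ p := by
    rw [Real.div_rpow ht zero_le_two, show (4 : ℝ) = 2 * 2 by norm_num,
      Real.mul_rpow zero_le_two zero_le_two]
    field_simp
  calc p / (4 ^ p * 3 ^ (p - 2)) * (t ^ 2 * (s + t) ^ (p - 2))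
      ≤ p / (4 ^ p * 3 ^ (p - 2)) * (3 ^ (p - 2) * t ^ p) := by gcongr
    _ = p * t ^ p / 4 ^ p := by field_simp
    _ ≤ rpowBregman p r s := h4 ▸ hbound.trans (le_rpowBregman_of_two_le hp hr hs)
    _ ≤ triangleBregman p r s t := rpowBregman_le_triangleBregman (by linarith) hs hrs

theorem exists_le_triangleBregman_far (hp : 1 < p) :
    ∃ c > 0, ∀ r s t : ℝ, 0 ≤ r → 0 < s → |r - s| ≤ t → t ≤ r + s → s ≤ 2 * t →
      c * (t ^ 2 * (s + t) ^ (p - 2)) ≤ triangleBregman p r s t := by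
  refine ⟨min (3 * p / (8 * 5 ^ |p - 2|)) (min (p * (p - 1) / 16) (p / (4 ^ p * 3 ^ (p - 2)))),
    by positivity, fun r s t hr hs hrs htr hst => ?_⟩
  have hQ : 0 ≤ t ^ 2 * (s + t) ^ (p - 2) :=
    mul_nonneg (sq_nonneg t) (Real.rpow_nonneg (by linarith [abs_nonneg (r - s)]) _)
  rcases le_or_gt |r - s| (t / 2) with hnear | hfar
  · exact (mul_le_mul_of_nonneg_right (min_le_left _ _) hQ).trans
      (le_triangleBregman_of_abs_sub_le_half hp hr hs hnear htr)
  rcases le_or_gt p 2 with hp₂ | hp₂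
  · exact (mul_le_mul_of_nonneg_right ((min_le_right _ _).trans (min_le_left _ _)) hQ).trans
      (le_triangleBregman_of_le_two hp hp₂ hr hs hrs hfar.le)
  · exact (mul_le_mul_of_nonneg_right ((min_le_right _ _).trans (min_le_right _ _)) hQ).trans
      (le_triangleBregman_of_two_le hp₂.le hr hs hrs hfar.le hst)

theorem exists_triangleBregman_bounds (hp : 1 < p) :
    ∃ c C : ℝ, 0 < c ∧ 0 < C ∧ ∀ r s t : ℝ, 0 ≤ r → 0 ≤ s → |r - s| ≤ t → t ≤ r + s →
      c * (t ^ 2 * (s + t) ^ (p - 2)) ≤ triangleBregman p r s t ∧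
        triangleBregman p r s t ≤ C * (t ^ 2 * (s + t) ^ (p - 2)) := by
  obtain ⟨c, hc, hlow_far⟩ := exists_le_triangleBregman_far hp
  set c₀ := p * min (p - 1) 1 / (2 * 3 ^ |p - 2|)
  set C₀ := p ^ 2 * 3 ^ |p - 2| / 2
  have hc₀ : 0 < c₀ := by
    have : 0 < min (p - 1) 1 := lt_min (by linarith) one_pos
    positivity
  refine ⟨min (min c₀ c) 1, max (max C₀ (9 * (1 + p))) 1, lt_min (lt_min hc₀ hc) one_pos,
    lt_max_of_lt_right one_pos, fun r s t hr hs hrs htr => ?_⟩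
  have hQ : 0 ≤ t ^ 2 * (s + t) ^ (p - 2) :=
    mul_nonneg (sq_nonneg t) (Real.rpow_nonneg (by linarith [abs_nonneg (r - s)]) _)
  have hcQ {a b : ℝ} (hab : a ≤ b) : a * (t ^ 2 * (s + t) ^ (p - 2)) ≤ b * _ :=
    mul_le_mul_of_nonneg_right hab hQ
  rcases hs.eq_or_lt with rfl | hs
  · have hrt : r = t := by rw [sub_zero, abs_of_nonneg hr] at hrs; linarith
    subst hrt
    have hG : triangleBregman p r 0 r = 1 * (r ^ 2 * (0 + r) ^ (p - 2)) := by
      rw [triangleBregman, zero_add, one_mul, ← Real.rpow_eq_sq_mul_rpow_sub_two hr (by linarith),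
        Real.zero_rpow (by linarith)]
      ring
    rw [hG]
    exact ⟨hcQ (min_le_right _ _), hcQ (le_max_right _ _)⟩
  rcases le_or_gt t (s / 2) with hnear | hfar
  · exact ⟨(hcQ ((min_le_left _ _).trans (min_le_left _ _))).trans
        (le_triangleBregman_of_near hp hs hrs hnear),
      (triangleBregman_le_of_near hp hs hrs hnear).trans
        (hcQ ((le_max_left _ _).trans (le_max_left _ _)))⟩
  · exact ⟨(hcQ ((min_le_left _ _).trans (min_le_right _ _))).trans
        (hlow_far r s t hr hs hrs htr (by linarith)),
      (triangleBregman_le_far hp hr hs hrs htr (by linarith)).trans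
        (hcQ ((le_max_right _ _).trans (le_max_left _ _)))⟩

end Triangle

universe u

theorem exists_norm_rpow_bregman_bounds {p : ℝ} (hp : 1 < p) :
    ∃ c C : ℝ, 0 < c ∧ 0 < C ∧
      ∀ (E : Type u) [SeminormedAddCommGroup E] [InnerProductSpace ℝ E] (x y : E),
        c * ‖y‖ ^ 2 * (‖y‖ + ‖x‖) ^ (p - 2)
            ≤ ‖x + y‖ ^ p - ‖x‖ ^ p - p * (‖x‖ ^ (p - 2) * inner ℝ x y) ∧
          ‖x + y‖ ^ p - ‖x‖ ^ p - p * (‖x‖ ^ (p - 2) * inner ℝ x y)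
            ≤ C * ‖y‖ ^ 2 * (‖y‖ + ‖x‖) ^ (p - 2) := by
  obtain ⟨c, C, hc, hC, h⟩ := exists_triangleBregman_bounds hp
  refine ⟨c, C, hc, hC, fun E _ _ x y => ?_⟩
  have hinner : inner ℝ x y = (‖x + y‖ ^ 2 - ‖x‖ ^ 2 - ‖y‖ ^ 2) / 2 := by
    rw [norm_add_sq_real]; ring
  have := h ‖x + y‖ ‖x‖ ‖y‖ (norm_nonneg _) (norm_nonneg _)
    (by simpa using abs_norm_sub_norm_le (x + y) x) (by simpa using norm_sub_le (x + y) x)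
  rw [triangleBregman, ← hinner, add_comm ‖x‖] at this
  rwa [mul_assoc c, mul_assoc C]

/-- Two-sided Bregman-distance estimate for `|·|_A^p`, with
constants depending only on `p`. -/
theorem stmt_7 (p : ℝ) (hp : 1 < p) :
    ∃ c C : ℝ, 0 < c ∧ 0 < C ∧
      ∀ (n : ℕ), 2 ≤ n → ∀ A : Matrix (Fin n) (Fin n) ℝ, A.IsSymm → A.PosDef →
        ∀ ξ η : Fin n → ℝ, ¬(ξ = 0 ∧ η = 0) →
          c * Real.sqrt (A.mulVec η ⬝ᵥ η) ^ 2 *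
              (Real.sqrt (A.mulVec η ⬝ᵥ η) + Real.sqrt (A.mulVec ξ ⬝ᵥ ξ)) ^ (p - 2)
            ≤ Real.sqrt (A.mulVec (ξ + η) ⬝ᵥ (ξ + η)) ^ p - Real.sqrt (A.mulVec ξ ⬝ᵥ ξ) ^ p
              - p * (if ξ = 0 then 0 else
                  Real.sqrt (A.mulVec ξ ⬝ᵥ ξ) ^ (p - 2) * (A.mulVec ξ ⬝ᵥ η)) ∧
          Real.sqrt (A.mulVec (ξ + η) ⬝ᵥ (ξ + η)) ^ p - Real.sqrt (A.mulVec ξ ⬝ᵥ ξ) ^ p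
              - p * (if ξ = 0 then 0 else
                  Real.sqrt (A.mulVec ξ ⬝ᵥ ξ) ^ (p - 2) * (A.mulVec ξ ⬝ᵥ η))
            ≤ C * Real.sqrt (A.mulVec η ⬝ᵥ η) ^ 2 *
                (Real.sqrt (A.mulVec η ⬝ᵥ η) + Real.sqrt (A.mulVec ξ ⬝ᵥ ξ)) ^ (p - 2) := by
  obtain ⟨c, C, hc, hC, h⟩ := exists_norm_rpow_bregman_bounds.{0} hp
  refine ⟨c, C, hc, hC, fun n _ A hA hApos ξ η _ => ?_⟩
  have hite : (if ξ = 0 then 0 else Real.sqrt (A.mulVec ξ ⬝ᵥ ξ) ^ (p - 2) * (A.mulVec ξ ⬝ᵥ η))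
      = Real.sqrt (A.mulVec ξ ⬝ᵥ ξ) ^ (p - 2) * (A.mulVec ξ ⬝ᵥ η) := by
    split_ifs with hξ <;> simp [hξ]
  have hdot : A.mulVec η ⬝ᵥ ξ = A.mulVec ξ ⬝ᵥ η := by
    rw [dotProduct_comm, dotProduct_mulVec, ← mulVec_transpose, hA.eq]
  rw [hite, ← hdot]
  -- `A` induces the inner product `⟪x, y⟫ = (A *ᵥ y) ⬝ᵥ x`, whose norm is `|·|_A`.
  exact @h (Fin n → ℝ) (A.toSeminormedAddCommGroup hApos.posSemidef)
    (A.toInnerProductSpace hApos.posSemidef) ξ η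
end

section
/- Let 2 ≤ s < ∞. There exists a constant C = C(p,s) > 0 such that for all ξ = (ξ₁,…,ξₙ), η = (η₁,…,ηₙ) ∈ ℝⁿ with (ξ,η) ≠ (0,0): |ξ+η|_s^p − |ξ|_s^p − p·|ξ|_s^{p−s}·∑_{i=1}^n |ξᵢ|^{s−2} ξᵢ ηᵢ ≤ C·|η|_s²·(|ξ|_s + |η|_s)^{p−2}, where the middle (gradient) term is interpreted as 0 when ξ = 0. -/
/-!
Write `f(x) = |x|_s ^ p` and `J x = (|xᵢ|^{s-2} xᵢ)ᵢ`. Along the segment `t ↦ ξ + tη` the second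
derivative of `f` is `p (p - s) |x|_s^{p-2s} ⟨J x, η⟩² + p (s - 1) |x|_s^{p-s} ∑ |xᵢ|^{s-2} ηᵢ²`,
and Hölder's inequality bounds both terms by a multiple of `|x|_s^{p-2} |η|_s²`.
If `|η|_s ≤ |ξ|_s / 2`, the norm stays between `|ξ|_s / 2` and `|ξ|_s + |η|_s` on the segment,
so Taylor's formula gives the bound. Otherwise `|ξ|_s + |η|_s ≤ 3 |η|_s`, and the three terms of
the Bregman gap are estimated separately with Minkowski's and Hölder's inequalities.
-/

open Real Finset Filter Topology Asymptotics

lemma sub_sub_le_of_hasDerivAt_of_le {g g' g'' : ℝ → ℝ} {L : ℝ}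
    (hg : ∀ t ∈ Set.Icc (0 : ℝ) 1, HasDerivAt g (g' t) t)
    (hg' : ∀ t ∈ Set.Icc (0 : ℝ) 1, HasDerivAt g' (g'' t) t)
    (hL : ∀ t ∈ Set.Icc (0 : ℝ) 1, g'' t ≤ L) :
    g 1 - g 0 - g' 0 ≤ L / 2 := by
  have hψ : AntitoneOn (fun t => g' t - L * t) (Set.Icc 0 1) := by
    refine antitoneOn_of_hasDerivWithinAt_nonpos (convex_Icc 0 1)
      (fun t ht => ((hg' t ht).continuousAt.sub (continuousAt_id.const_mul L)).continuousWithinAt)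
      (fun t ht => ((hg' t (interior_subset ht)).sub
        ((hasDerivAt_id t).const_mul L)).hasDerivWithinAt) fun t ht => ?_
    linarith [hL t (interior_subset ht)]
  have hφ : AntitoneOn (fun t => g t - t * g' 0 - L / 2 * t ^ 2) (Set.Icc 0 1) := by
    refine antitoneOn_of_hasDerivWithinAt_nonpos (convex_Icc 0 1)
      (fun t ht => (((hg t ht).continuousAt.sub (continuousAt_id.mul continuousAt_const)).sub
        ((continuousAt_id.pow 2).const_mul _)).continuousWithinAt)
      (fun t ht => (((hg t (interior_subset ht)).sub ((hasDerivAt_id t).mul_const (g' 0))).sub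
        ((hasDerivAt_pow 2 t).const_mul (L / 2))).hasDerivWithinAt) fun t ht => ?_
    have h0 : (0 : ℝ) ∈ Set.Icc 0 1 := Set.left_mem_Icc.2 zero_le_one
    have := hψ h0 (interior_subset ht) (interior_subset ht).1
    simp only [mul_zero, sub_zero] at this ⊢
    push_cast
    linarith
  have := hφ (Set.left_mem_Icc.2 zero_le_one) (Set.right_mem_Icc.2 zero_le_one) zero_le_one
  norm_num at this
  linarith

lemma rpow_le_rpow_abs_mul_rpow_of_le_mul {x y c : ℝ} (q : ℝ) (hx : 0 < x) (hc : 1 ≤ c)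
    (hyx : y ≤ c * x) (hxy : x ≤ c * y) : x ^ q ≤ c ^ |q| * y ^ q := by
  have hy : 0 < y := by nlinarith
  rcases le_or_gt 0 q with hq | hq
  · calc x ^ q ≤ (c * y) ^ q := rpow_le_rpow hx.le hxy hq
      _ = c ^ |q| * y ^ q := by rw [abs_of_nonneg hq, mul_rpow (by linarith) hy.le]
  · calc x ^ q ≤ (c⁻¹ * y) ^ q := by
          refine rpow_le_rpow_of_nonpos (by positivity) ?_ hq.le
          rwa [inv_mul_le_iff₀ (by linarith)]
      _ = c ^ |q| * y ^ q := by
          rw [abs_of_neg hq, mul_rpow (by positivity) hy.le, inv_rpow (by linarith),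
            rpow_neg (by linarith)]

lemma hasDerivAt_abs_rpow_sub_two_mul_self {s : ℝ} (hs : 2 ≤ s) (u : ℝ) :
    HasDerivAt (fun u => |u| ^ (s - 2) * u) ((s - 1) * |u| ^ (s - 2)) u := by
  rcases eq_or_ne u 0 with rfl | hu
  · rcases hs.eq_or_lt with rfl | hs
    · norm_num
      exact hasDerivAt_id' 0
    -- `|h| ^ (s - 2) → 0`, hence `|h| ^ (s - 2) * h = o(h)`
    have hs0 : s - 2 ≠ 0 := by linarith
    have hlim : Tendsto (fun h : ℝ => |h| ^ (s - 2)) (𝓝 0) (𝓝 0) := by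
      simpa [zero_rpow hs0] using
        ((continuous_abs.rpow_const (p := s - 2) fun _ => Or.inr (by linarith)).tendsto (0 : ℝ))
    rw [hasDerivAt_iff_isLittleO_nhds_zero]
    simpa [zero_rpow hs0] using
      ((isLittleO_one_iff ℝ).2 hlim).mul_isBigO (isBigO_refl (fun h : ℝ => h) _)
  · have h := ((hasDerivAt_abs hu).rpow_const (p := s - 2) (Or.inl (abs_ne_zero.2 hu))).mul
      (hasDerivAt_id u)
    refine h.congr_deriv ?_
    have hsign : (SignType.sign u : ℝ) * u = |u| := sign_mul_self u
    rw [id, rpow_sub_one (abs_ne_zero.2 hu)]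
    field_simp
    linear_combination (s - 2) * hsign

noncomputable section

variable {ι : Type*} [Fintype ι] {p s : ℝ}

def sNorm (s : ℝ) (x : ι → ℝ) : ℝ := (∑ i, |x i| ^ s) ^ (1 / s)

def dualPairing (s : ℝ) (x y : ι → ℝ) : ℝ := ∑ i, |x i| ^ (s - 2) * x i * y i

def weightedSq (s : ℝ) (x y : ι → ℝ) : ℝ := ∑ i, |x i| ^ (s - 2) * y i ^ 2

/-- The Bregman gap of `sNorm s ^ p`. Its last term is the derivative of `sNorm s ^ p` at `x ≠ 0`
in the direction `y`; at `x = 0` it vanishes (`dualPairing s 0 y = 0`) whatever `0 ^ (p - s)` is. -/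
def bregman (p s : ℝ) (x y : ι → ℝ) : ℝ :=
  sNorm s (x + y) ^ p - sNorm s x ^ p - p * sNorm s x ^ (p - s) * dualPairing s x y

lemma sum_abs_rpow_nonneg (s : ℝ) (x : ι → ℝ) : 0 ≤ ∑ i, |x i| ^ s :=
  sum_nonneg fun _ _ => rpow_nonneg (abs_nonneg _) _

lemma sum_abs_rpow_pos {x : ι → ℝ} (hx : x ≠ 0) : 0 < ∑ i, |x i| ^ s := by
  obtain ⟨j, hj⟩ := Function.ne_iff.1 hx
  exact sum_pos' (fun _ _ => rpow_nonneg (abs_nonneg _) _)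
    ⟨j, mem_univ j, rpow_pos_of_pos (abs_pos.2 hj) _⟩

lemma sNorm_nonneg (s : ℝ) (x : ι → ℝ) : 0 ≤ sNorm s x :=
  rpow_nonneg (sum_abs_rpow_nonneg s x) _

lemma sNorm_pos {x : ι → ℝ} (hx : x ≠ 0) : 0 < sNorm s x :=
  rpow_pos_of_pos (sum_abs_rpow_pos hx) _

lemma sNorm_zero (hs : s ≠ 0) : sNorm s (0 : ι → ℝ) = 0 := by
  simp [sNorm, zero_rpow hs, hs]

lemma sNorm_rpow (x : ι → ℝ) (q : ℝ) : sNorm s x ^ q = (∑ i, |x i| ^ s) ^ (q / s) := by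
  rw [sNorm, ← rpow_mul (sum_abs_rpow_nonneg s x), one_div_mul_eq_div]

lemma sNorm_smul (hs : s ≠ 0) (t : ℝ) (x : ι → ℝ) : sNorm s (t • x) = |t| * sNorm s x := by
  simp only [sNorm, Pi.smul_apply, smul_eq_mul, abs_mul,
    mul_rpow (abs_nonneg t) (abs_nonneg _), ← mul_sum]
  rw [mul_rpow (rpow_nonneg (abs_nonneg t) _) (sum_abs_rpow_nonneg s x), ← rpow_mul (abs_nonneg t),
    mul_one_div_cancel hs, rpow_one]

lemma sNorm_neg (x : ι → ℝ) : sNorm s (-x) = sNorm s x := by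
  simp [sNorm]

lemma sNorm_add_le (hs : 1 ≤ s) (x y : ι → ℝ) : sNorm s (x + y) ≤ sNorm s x + sNorm s y :=
  Real.Lp_add_le univ x y hs

lemma abs_sNorm_add_sub_le (hs : 1 ≤ s) (x y : ι → ℝ) :
    |sNorm s (x + y) - sNorm s x| ≤ sNorm s y := by
  have := sNorm_add_le hs (x + y) (-y)
  rw [add_neg_cancel_right, sNorm_neg] at this
  rw [abs_sub_le_iff]
  constructor <;> linarith [sNorm_add_le hs x y]

@[simp]
lemma dualPairing_zero_left (s : ℝ) (y : ι → ℝ) : dualPairing s 0 y = 0 := by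
  simp [dualPairing]

lemma abs_dualPairing_le (hs : 1 < s) (x y : ι → ℝ) :
    |dualPairing s x y| ≤ sNorm s x ^ (s - 1) * sNorm s y := by
  have hs' : s - 1 ≠ 0 := by linarith
  calc |dualPairing s x y| ≤ ∑ i, |x i| ^ (s - 1) * |y i| := by
        refine (abs_sum_le_sum_abs _ _).trans_eq (sum_congr rfl fun i _ => ?_)
        rw [abs_mul, abs_mul, abs_of_nonneg (rpow_nonneg (abs_nonneg _) _),
          ← rpow_add_one' (abs_nonneg _) (by linarith)]
        ring_nf
    _ ≤ (∑ i, (|x i| ^ (s - 1)) ^ (s / (s - 1))) ^ (1 / (s / (s - 1))) *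
          (∑ i, |y i| ^ s) ^ (1 / s) :=
        inner_le_Lp_mul_Lq_of_nonneg univ (HolderConjugate.conjExponent hs).symm
          (fun _ _ => rpow_nonneg (abs_nonneg _) _) fun _ _ => abs_nonneg _
    _ = sNorm s x ^ (s - 1) * sNorm s y := by
        simp only [← rpow_mul (abs_nonneg _), mul_div_cancel₀ s hs', one_div_div, sNorm_rpow]
        rfl

lemma weightedSq_le (hs : 2 ≤ s) (x y : ι → ℝ) :
    weightedSq s x y ≤ sNorm s x ^ (s - 2) * sNorm s y ^ 2 := by
  have hy : ∀ i, y i ^ 2 = |y i| ^ (2 : ℝ) := fun i => by rw [rpow_two, sq_abs]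
  rcases hs.eq_or_lt with rfl | hs
  · rw [← rpow_two, sNorm_rpow, sNorm_rpow]
    simp only [weightedSq, hy]
    norm_num
  have hs' : s - 2 ≠ 0 := by linarith
  have hconj : HolderConjugate (s / (s - 2)) (s / 2) :=
    ((holderConjugate_iff_eq_conjExponent (p := s / 2) (by linarith)).2 (by field_simp)).symm
  calc weightedSq s x y
      ≤ (∑ i, (|x i| ^ (s - 2)) ^ (s / (s - 2))) ^ (1 / (s / (s - 2))) *
          (∑ i, (|y i| ^ (2 : ℝ)) ^ (s / 2)) ^ (1 / (s / 2)) := by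
        simp only [weightedSq, hy]
        exact inner_le_Lp_mul_Lq_of_nonneg univ hconj (fun _ _ => rpow_nonneg (abs_nonneg _) _)
          fun _ _ => rpow_nonneg (abs_nonneg _) _
    _ = sNorm s x ^ (s - 2) * sNorm s y ^ 2 := by
        simp only [← rpow_mul (abs_nonneg _), mul_div_cancel₀ s hs', mul_div_cancel₀ s two_ne_zero,
          one_div_div, ← rpow_two, sNorm_rpow]

lemma hasDerivAt_sum_abs_rpow_line (hs : 1 < s) (x y : ι → ℝ) (t : ℝ) :
    HasDerivAt (fun t => ∑ i, |(x + t • y) i| ^ s) (s * dualPairing s (x + t • y) y) t := by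
  have h := HasDerivAt.fun_sum fun i (_ : i ∈ univ) =>
    (hasDerivAt_abs_rpow _ hs).comp t (((hasDerivAt_id t).mul_const (y i)).const_add (x i))
  refine h.congr_deriv ?_
  rw [dualPairing, mul_sum]
  refine sum_congr rfl fun i _ => ?_
  simp only [Pi.add_apply, Pi.smul_apply, smul_eq_mul, id]
  ring

lemma hasDerivAt_dualPairing_line (hs : 2 ≤ s) (x y : ι → ℝ) (t : ℝ) :
    HasDerivAt (fun t => dualPairing s (x + t • y) y) ((s - 1) * weightedSq s (x + t • y) y) t := by
  have h := HasDerivAt.fun_sum fun i (_ : i ∈ univ) =>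
    ((hasDerivAt_abs_rpow_sub_two_mul_self hs _).comp t
      (((hasDerivAt_id t).mul_const (y i)).const_add (x i))).mul_const (y i)
  refine h.congr_deriv ?_
  rw [weightedSq, mul_sum]
  refine sum_congr rfl fun i _ => ?_
  simp only [Pi.add_apply, Pi.smul_apply, smul_eq_mul, id]
  ring

lemma hasDerivAt_sNorm_rpow_line (hs : 1 < s) (x y : ι → ℝ) (q : ℝ) {t : ℝ}
    (hxt : x + t • y ≠ 0) :
    HasDerivAt (fun t => sNorm s (x + t • y) ^ q)
      (q * sNorm s (x + t • y) ^ (q - s) * dualPairing s (x + t • y) y) t := by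
  have h := (hasDerivAt_sum_abs_rpow_line hs x y t).rpow_const (p := q / s)
    (Or.inl (sum_abs_rpow_pos hxt).ne')
  simp only [sNorm_rpow]
  refine h.congr_deriv ?_
  rw [sub_div, div_self (by linarith)]
  field_simp

lemma second_deriv_sNorm_rpow_le (hp : 0 < p) (hs : 2 ≤ s) {x : ι → ℝ} (hx : x ≠ 0)
    (y : ι → ℝ) :
    p * ((p - s) * sNorm s x ^ (p - s - s) * dualPairing s x y) * dualPairing s x y +
        p * sNorm s x ^ (p - s) * ((s - 1) * weightedSq s x y) ≤
      p * (|p - s| + (s - 1)) * sNorm s x ^ (p - 2) * sNorm s y ^ 2 := by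
  set N := sNorm s x
  set B := sNorm s y
  set P := dualPairing s x y
  have hN : 0 < N := sNorm_pos hx
  have hP : P ^ 2 ≤ (N ^ (s - 1) * B) ^ 2 := by
    rw [← sq_abs]
    exact pow_le_pow_left₀ (abs_nonneg _) (abs_dualPairing_le (by linarith) x y) 2
  have hexp₁ : N ^ (p - s - s) * (N ^ (s - 1)) ^ 2 = N ^ (p - 2) := by
    rw [sq, ← rpow_add hN, ← rpow_add hN]
    ring_nf
  have hexp₂ : N ^ (p - s) * N ^ (s - 2) = N ^ (p - 2) := by
    rw [← rpow_add hN]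
    ring_nf
  have hs1 : 0 ≤ s - 1 := by linarith
  calc p * ((p - s) * N ^ (p - s - s) * P) * P + p * N ^ (p - s) * ((s - 1) * weightedSq s x y)
      = p * ((p - s) * N ^ (p - s - s) * P ^ 2) +
          p * (s - 1) * (N ^ (p - s) * weightedSq s x y) := by
        ring
    _ ≤ p * (|p - s| * N ^ (p - s - s) * (N ^ (s - 1) * B) ^ 2) +
          p * (s - 1) * (N ^ (p - s) * (N ^ (s - 2) * B ^ 2)) := by
        gcongr
        · exact le_abs_self _
        · exact weightedSq_le hs x y
    _ = p * (|p - s| + (s - 1)) * N ^ (p - 2) * B ^ 2 := by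
        linear_combination (p * |p - s| * B ^ 2) * hexp₁ + (p * (s - 1) * B ^ 2) * hexp₂

lemma bregman_le_of_two_mul_le (hp : 0 < p) (hs : 2 ≤ s) {x y : ι → ℝ} (hx : x ≠ 0)
    (hxy : 2 * sNorm s y ≤ sNorm s x) :
    bregman p s x y ≤
      p * (|p - s| + (s - 1)) * 3 ^ |p - 2| / 2 * sNorm s y ^ 2 *
        (sNorm s x + sNorm s y) ^ (p - 2) := by
  set A := sNorm s x
  set B := sNorm s y
  have hs1 : 1 < s := by linarith
  have hA : 0 < A := sNorm_pos hx
  have hB : 0 ≤ B := sNorm_nonneg s y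
  have hline : ∀ t ∈ Set.Icc (0 : ℝ) 1,
      A / 2 ≤ sNorm s (x + t • y) ∧ sNorm s (x + t • y) ≤ A + B := by
    intro t ht
    have h := abs_sNorm_add_sub_le hs1.le x (t • y)
    rw [sNorm_smul (by linarith), abs_of_nonneg ht.1] at h
    have htB : t * B ≤ B := mul_le_of_le_one_left hB ht.2
    constructor <;> linarith [abs_le.1 h]
  have hne : ∀ t ∈ Set.Icc (0 : ℝ) 1, x + t • y ≠ 0 := fun t ht h0 => by
    have := (hline t ht).1
    rw [h0, sNorm_zero (by linarith)] at this
    linarith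
  have h := sub_sub_le_of_hasDerivAt_of_le
    (g := fun t => sNorm s (x + t • y) ^ p)
    (g' := fun t => p * sNorm s (x + t • y) ^ (p - s) * dualPairing s (x + t • y) y)
    (fun t ht => hasDerivAt_sNorm_rpow_line hs1 x y p (hne t ht))
    (fun t ht => ((hasDerivAt_sNorm_rpow_line hs1 x y (p - s) (hne t ht)).const_mul p).mul
      (hasDerivAt_dualPairing_line hs x y t))
    (L := p * (|p - s| + (s - 1)) * 3 ^ |p - 2| * B ^ 2 * (A + B) ^ (p - 2))
    fun t ht => by
      obtain ⟨hlow, hup⟩ := hline t ht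
      have hcomp := rpow_le_rpow_abs_mul_rpow_of_le_mul (p - 2) (by linarith)
        (by norm_num : (1 : ℝ) ≤ 3) (by linarith) (by linarith : sNorm s (x + t • y) ≤ 3 * (A + B))
      have : 0 ≤ |p - s| + (s - 1) := by positivity
      calc _ ≤ p * (|p - s| + (s - 1)) * sNorm s (x + t • y) ^ (p - 2) * B ^ 2 :=
            second_deriv_sNorm_rpow_le hp hs (hne t ht) y
        _ ≤ p * (|p - s| + (s - 1)) * (3 ^ |p - 2| * (A + B) ^ (p - 2)) * B ^ 2 := by gcongr
        _ = _ := by ring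
  simp only [zero_smul, add_zero, one_smul] at h
  rw [bregman]
  linarith

lemma bregman_le_of_lt_two_mul (hp : 1 < p) (hs : 1 < s) {x y : ι → ℝ}
    (hxy : sNorm s x < 2 * sNorm s y) :
    bregman p s x y ≤ (3 * p + 9) * sNorm s y ^ 2 * (sNorm s x + sNorm s y) ^ (p - 2) := by
  set A := sNorm s x
  set B := sNorm s y
  have hA : 0 ≤ A := sNorm_nonneg s x
  have hB : 0 < B := by linarith
  have hAB : 0 < A + B := by linarith
  have hAB3 : A + B ≤ 3 * B := by linarith
  have hgrad : -(p * A ^ (p - s) * dualPairing s x y) ≤ p * (A + B) ^ (p - 2) * (A + B) * B := by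
    calc -(p * A ^ (p - s) * dualPairing s x y)
        ≤ p * A ^ (p - s) * (A ^ (s - 1) * B) := by
          rw [← mul_neg]
          gcongr
          exact (neg_le_abs _).trans (abs_dualPairing_le hs x y)
      _ = p * A ^ (p - 1) * B := by
          rw [← mul_assoc, mul_assoc p, ← rpow_add' hA (by linarith)]
          ring_nf
      _ ≤ p * (A + B) ^ (p - 1) * B := by
          gcongr
          linarith
      _ = p * (A + B) ^ (p - 2) * (A + B) * B := by
          rw [show p - 1 = p - 2 + 1 by ring, rpow_add_one hAB.ne']
          ring
  have hnorm : sNorm s (x + y) ^ p ≤ (A + B) ^ (p - 2) * (A + B) ^ 2 := by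
    rw [← rpow_natCast, ← rpow_add hAB]
    norm_num
    exact rpow_le_rpow (sNorm_nonneg s _) (sNorm_add_le hs.le x y) (by linarith)
  have hApow : 0 ≤ A ^ p := rpow_nonneg hA p
  have h₁ : (A + B) ^ (p - 2) * (A + B) ^ 2 ≤ (A + B) ^ (p - 2) * (3 * B) ^ 2 := by gcongr
  have h₂ : p * (A + B) ^ (p - 2) * (A + B) * B ≤ p * (A + B) ^ (p - 2) * (3 * B) * B := by
    gcongr
  rw [bregman]
  linarith

theorem bregman_le (hp : 1 < p) (hs : 2 ≤ s) {x y : ι → ℝ} (hxy : ¬(x = 0 ∧ y = 0)) :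
    bregman p s x y ≤ (p * (|p - s| + (s - 1)) * 3 ^ |p - 2| / 2 + (3 * p + 9)) *
      sNorm s y ^ 2 * (sNorm s x + sNorm s y) ^ (p - 2) := by
  have hscale : 0 ≤ sNorm s y ^ 2 * (sNorm s x + sNorm s y) ^ (p - 2) :=
    mul_nonneg (sq_nonneg _) (rpow_nonneg (add_nonneg (sNorm_nonneg s x) (sNorm_nonneg s y)) _)
  have hK : 0 ≤ p * (|p - s| + (s - 1)) * 3 ^ |p - 2| / 2 := by
    have : 0 ≤ |p - s| + (s - 1) := by linarith [abs_nonneg (p - s)]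
    have : 0 ≤ p := by linarith
    positivity
  rw [mul_assoc]
  rcases lt_or_ge (sNorm s x) (2 * sNorm s y) with hlarge | hsmall
  · refine (bregman_le_of_lt_two_mul hp (by linarith) hlarge).trans ?_
    rw [mul_assoc]
    exact mul_le_mul_of_nonneg_right (by linarith) hscale
  · have hx : x ≠ 0 := by
      rintro rfl
      refine hxy ⟨rfl, ?_⟩
      by_contra hy
      rw [sNorm_zero (by linarith)] at hsmall
      linarith [sNorm_pos (s := s) hy]
    refine (bregman_le_of_two_mul_le (by linarith) hs hx hsmall).trans ?_
    rw [mul_assoc]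
    exact mul_le_mul_of_nonneg_right (by linarith) hscale

end

/-- Upper Bregman-distance estimate for the `s`-norm to the
power `p` (`2 ≤ s`), with a constant `C = C(p,s)`. -/
theorem stmt_8 (p s : ℝ) (hp : 1 < p) (hs : 2 ≤ s) :
    ∃ C : ℝ, 0 < C ∧
      ∀ (n : ℕ), 2 ≤ n → ∀ ξ η : Fin n → ℝ, ¬(ξ = 0 ∧ η = 0) →
        ((∑ i, |ξ i + η i| ^ s) ^ (1 / s)) ^ p - ((∑ i, |ξ i| ^ s) ^ (1 / s)) ^ p -
            (if ξ = 0 then 0 else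
              p * ((∑ i, |ξ i| ^ s) ^ (1 / s)) ^ (p - s) *
                ∑ i, |ξ i| ^ (s - 2) * ξ i * η i)
          ≤ C * ((∑ i, |η i| ^ s) ^ (1 / s)) ^ 2 *
              ((∑ i, |ξ i| ^ s) ^ (1 / s) + (∑ i, |η i| ^ s) ^ (1 / s)) ^ (p - 2) := by
  refine ⟨p * (|p - s| + (s - 1)) * 3 ^ |p - 2| / 2 + (3 * p + 9), ?_, fun n _ ξ η hξη => ?_⟩
  · have : 0 ≤ |p - s| + (s - 1) := by linarith [abs_nonneg (p - s)]
    have : 0 < p := by linarith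
    positivity
  have hgrad : (if ξ = 0 then 0 else p * sNorm s ξ ^ (p - s) * dualPairing s ξ η) =
      p * sNorm s ξ ^ (p - s) * dualPairing s ξ η := by
    split_ifs with h <;> simp [h]
  change _ - _ - (if ξ = 0 then 0 else p * sNorm s ξ ^ (p - s) * dualPairing s ξ η) ≤ _
  rw [hgrad]
  exact bregman_le hp hs hξη
end

section
/- Let H be a norm on ℝⁿ differentiable on ℝⁿ\{0}, and suppose the map A := ∇(H^p/p) is continuously differentiable on ℝⁿ\{0} and there exist constants Λ₁, Λ₂ > 0 such that for all ξ ∈ ℝⁿ\{0} and all η ∈ ℝⁿ: ⟪(DA(ξ))η, η⟫ ≥ Λ₁·|ξ|^{p−2}·|η|² and ‖DA(ξ)‖ ≤ Λ₂·|ξ|^{p−2}, where DA(ξ) is the derivative of A at ξ and ‖·‖ its operator norm. Then there exists a constant C > 0, depending only on p, Λ₁, Λ₂, such that for all ξ, η ∈ ℝⁿ (with A(0) := 0): if p ≥ 2 then H(ξ+η)^p − H(ξ)^p − p·⟪A(ξ), η⟫ ≥ C·|η|^p, and if 1 < p < 2 then for every (ξ,η) ≠ (0,0), H(ξ+η)^p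 − H(ξ)^p − p·⟪A(ξ), η⟫ ≥ C·|η|²·(|ξ| + |η|)^{p−2}. -/
open scoped Classical

open RealInnerProductSpace Set

/-!
Restrict `F = H^p/p` to the line `s ↦ ξ + s • η`. Its derivative `ψ s = ⟪A (ξ + s • η), η⟫`
exists everywhere (also where the line meets the origin, since `F` is `p`-homogeneous with
`p > 1`) and is continuous, and away from that point `ψ' = ⟪DA η, η⟫ ≥ Λ₁ ‖ξ + s • η‖^(p-2) ‖η‖²`.
Hence `ψ` is nondecreasing and grows by at least `m (b - a)` over any `[a, b]` where this lower
bound is `≥ m`, which makes the Bregman gap `F (ξ + η) - F ξ - ψ 0` at least `m (b - a) (1 - b)`.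
For `p ≥ 2` take an interval of length `1/4` on which the line stays at distance `≥ ‖η‖/8` from
the origin; for `p < 2` use `‖ξ + s • η‖ ≤ ‖ξ‖ + ‖η‖` on `[0, 1/2]`.
-/

theorem mul_sub_le_sub_of_hasDerivAt_Ioo {f f' : ℝ → ℝ} {a b C : ℝ} (hab : a ≤ b)
    (hf : ContinuousOn f (Icc a b)) (hf' : ∀ x ∈ Ioo a b, HasDerivAt f (f' x) x)
    (hC : ∀ x ∈ Ioo a b, C ≤ f' x) : C * (b - a) ≤ f b - f a := by
  refine (convex_Icc a b).mul_sub_le_image_sub_of_le_deriv hf ?_ ?_ a (left_mem_Icc.2 hab) b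
    (right_mem_Icc.2 hab) hab
  · rw [interior_Icc]
    exact fun x hx => (hf' x hx).differentiableAt.differentiableWithinAt
  · rw [interior_Icc]
    intro x hx
    rw [(hf' x hx).deriv]
    exact hC x hx

theorem mul_sub_le_sub_of_hasDerivAt_Ioo_of_ne {f f' : ℝ → ℝ} {a b C t : ℝ} (hab : a ≤ b)
    (hf : ContinuousOn f (Icc a b)) (hf' : ∀ x ∈ Ioo a b, x ≠ t → HasDerivAt f (f' x) x)
    (hC : ∀ x ∈ Ioo a b, x ≠ t → C ≤ f' x) : C * (b - a) ≤ f b - f a := by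
  by_cases ht : t ∈ Ioo a b
  · have hleft : C * (t - a) ≤ f t - f a :=
      mul_sub_le_sub_of_hasDerivAt_Ioo ht.1.le (hf.mono (Icc_subset_Icc_right ht.2.le))
        (fun x hx => hf' x ⟨hx.1, hx.2.trans ht.2⟩ hx.2.ne)
        (fun x hx => hC x ⟨hx.1, hx.2.trans ht.2⟩ hx.2.ne)
    have hright : C * (b - t) ≤ f b - f t :=
      mul_sub_le_sub_of_hasDerivAt_Ioo ht.2.le (hf.mono (Icc_subset_Icc_left ht.1.le))
        (fun x hx => hf' x ⟨ht.1.trans hx.1, hx.2⟩ hx.1.ne')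
        (fun x hx => hC x ⟨ht.1.trans hx.1, hx.2⟩ hx.1.ne')
    linarith
  · exact mul_sub_le_sub_of_hasDerivAt_Ioo hab hf
      (fun x hx => hf' x hx (ne_of_mem_of_not_mem hx ht))
      (fun x hx => hC x hx (ne_of_mem_of_not_mem hx ht))

theorem sub_mul_sub_le_of_hasDerivAt_of_monotoneOn {g ψ : ℝ → ℝ} {x b y : ℝ}
    (hg : ∀ s ∈ Icc x y, HasDerivAt g (ψ s) s) (hψ : MonotoneOn ψ (Icc x y))
    (hxb : x ≤ b) (hby : b ≤ y) :
    (y - b) * (ψ b - ψ x) ≤ g y - g x - (y - x) * ψ x := by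
  have hcont : ContinuousOn g (Icc x y) := fun s hs => (hg s hs).continuousAt.continuousWithinAt
  have hb : b ∈ Icc x y := ⟨hxb, hby⟩
  have hleft : ψ x * (b - x) ≤ g b - g x :=
    mul_sub_le_sub_of_hasDerivAt_Ioo hxb (hcont.mono (Icc_subset_Icc_right hby))
      (fun s hs => hg s ⟨hs.1.le, hs.2.le.trans hby⟩)
      (fun s hs => hψ ⟨le_rfl, hxb.trans hby⟩ ⟨hs.1.le, hs.2.le.trans hby⟩ hs.1.le)
  have hright : ψ b * (y - b) ≤ g y - g b :=
    mul_sub_le_sub_of_hasDerivAt_Ioo hby (hcont.mono (Icc_subset_Icc_left hxb))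
      (fun s hs => hg s ⟨hxb.trans hs.1.le, hs.2.le⟩)
      (fun s hs => hψ hb ⟨hxb.trans hs.1.le, hs.2.le⟩ hs.1.le)
  linarith

section Line

variable {E : Type*} [NormedAddCommGroup E] [InnerProductSpace ℝ E]

theorem exists_abs_sub_mul_norm_le_norm_add_smul (ξ η : E) :
    ∃ s₀ : ℝ, ∀ s : ℝ, |s - s₀| * ‖η‖ ≤ ‖ξ + s • η‖ := by
  rcases eq_or_ne η 0 with rfl | hη
  · exact ⟨0, fun s => by simp⟩
  have hη' : 0 < ‖η‖ := norm_pos_iff.2 hη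
  refine ⟨-⟪ξ, η⟫ / ‖η‖ ^ 2, fun s => ?_⟩
  have hinner : ⟪ξ + s • η, η⟫ = (s - -⟪ξ, η⟫ / ‖η‖ ^ 2) * ‖η‖ ^ 2 := by
    rw [inner_add_left, real_inner_smul_left, real_inner_self_eq_norm_sq]
    field_simp
    ring
  have hcs := abs_real_inner_le_norm (ξ + s • η) η
  rw [hinner, abs_mul, abs_of_nonneg (by positivity : (0 : ℝ) ≤ ‖η‖ ^ 2)] at hcs
  nlinarith

theorem hasDerivAt_inner_comp_add_smul {A : E → E} {ξ η : E} {t : ℝ}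
    (hA : DifferentiableAt ℝ A (ξ + t • η)) :
    HasDerivAt (fun s : ℝ => ⟪A (ξ + s • η), η⟫) ⟪fderiv ℝ A (ξ + t • η) η, η⟫ t := by
  have hline : HasDerivAt (fun s : ℝ => ξ + s • η) η t := by
    simpa using ((hasDerivAt_id t).smul_const η).const_add ξ
  exact (hA.hasFDerivAt.comp_hasDerivAt t hline).inner ℝ (hasDerivAt_const t η) |>.congr_deriv
    (by simp)

theorem comp_add_smul_eq_of_add_smul_eq_zero {p : ℝ} {F : E → ℝ}
    (hF : ∀ (c : ℝ) (ζ : E), F (c • ζ) = |c| ^ p * F ζ)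
    {ξ η : E} {t : ℝ} (ht : ξ + t • η = 0) :
    (fun s : ℝ => F (ξ + s • η)) = fun s => |s - t| ^ p * F η := by
  funext s
  rw [← hF, sub_smul, eq_neg_of_add_eq_zero_left ht]
  congr 1
  abel

end Line

section Homogeneous

variable {E : Type*} [NormedAddCommGroup E] [InnerProductSpace ℝ E] [CompleteSpace E]
  {p : ℝ} {F : E → ℝ} {A : E → E}

theorem hasDerivAt_comp_add_smul (hp : 1 < p) (hF : ∀ (c : ℝ) (ζ : E), F (c • ζ) = |c| ^ p * F ζ)
    (hA : ∀ ζ, ζ ≠ 0 → HasGradientAt F (A ζ) ζ) (hA0 : A 0 = 0) (ξ η : E) (t : ℝ) :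
    HasDerivAt (fun s : ℝ => F (ξ + s • η)) ⟪A (ξ + t • η), η⟫ t := by
  by_cases ht : ξ + t • η = 0
  · rw [comp_add_smul_eq_of_add_smul_eq_zero hF ht, ht, hA0, inner_zero_left]
    simpa using ((hasDerivAt_abs_rpow (t - t) hp).comp_sub_const t t).mul_const (F η)
  · have hline : HasDerivAt (fun s : ℝ => ξ + s • η) η t := by
      simpa using ((hasDerivAt_id t).smul_const η).const_add ξ
    exact (hasGradientAt_iff_hasFDerivAt.1 (hA _ ht)).comp_hasDerivAt t hline

theorem continuous_inner_comp_add_smul (hp : 1 < p)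
    (hF : ∀ (c : ℝ) (ζ : E), F (c • ζ) = |c| ^ p * F ζ)
    (hA : ∀ ζ, ζ ≠ 0 → HasGradientAt F (A ζ) ζ) (hA0 : A 0 = 0)
    (hAc : ∀ ζ, ζ ≠ 0 → ContinuousAt A ζ) (ξ η : E) :
    Continuous fun s : ℝ => ⟪A (ξ + s • η), η⟫ := by
  by_cases hsing : ∃ t : ℝ, ξ + t • η = 0
  · -- on a line through the origin the restriction of `F` is `C¹` with derivative our function
    obtain ⟨t, ht⟩ := hsing
    have hC1 : ContDiff ℝ 1 fun s : ℝ => F (ξ + s • η) := by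
      have h := ((contDiff_norm_rpow (E := ℝ) hp).comp
        (contDiff_id.sub (contDiff_const (c := t)))).mul (contDiff_const (c := F η))
      simp only [Function.comp_def, id, Real.norm_eq_abs] at h
      rwa [comp_add_smul_eq_of_add_smul_eq_zero hF ht]
    have hderiv : deriv (fun s : ℝ => F (ξ + s • η)) = fun s => ⟪A (ξ + s • η), η⟫ :=
      funext fun s => (hasDerivAt_comp_add_smul hp hF hA hA0 ξ η s).deriv
    exact hderiv ▸ hC1.continuous_deriv le_rfl
  · push Not at hsing
    refine continuous_iff_continuousAt.2 fun s => ?_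
    exact ((hAc _ (hsing s)).comp (f := fun s : ℝ => ξ + s • η) (by fun_prop)).inner
      continuousAt_const

theorem mul_le_bregman_of_le_inner_fderiv (hp : 1 < p)
    (hF : ∀ (c : ℝ) (ζ : E), F (c • ζ) = |c| ^ p * F ζ)
    (hA : ∀ ζ, ζ ≠ 0 → HasGradientAt F (A ζ) ζ) (hA0 : A 0 = 0)
    (hAd : ∀ ζ, ζ ≠ 0 → DifferentiableAt ℝ A ζ)
    (hAmono : ∀ ζ, ζ ≠ 0 → ∀ v, 0 ≤ ⟪fderiv ℝ A ζ v, v⟫)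
    {ξ η : E} (hη : η ≠ 0) {a b m : ℝ} (ha : 0 ≤ a) (hab : a ≤ b) (hb : b ≤ 1)
    (hm : ∀ s ∈ Ioo a b, ξ + s • η ≠ 0 → m ≤ ⟪fderiv ℝ A (ξ + s • η) η, η⟫) :
    m * (b - a) * (1 - b) ≤ F (ξ + η) - F ξ - ⟪A ξ, η⟫ := by
  obtain ⟨s₀, hs₀⟩ := exists_abs_sub_mul_norm_le_norm_add_smul ξ η
  have hreg : ∀ s, s ≠ s₀ → ξ + s • η ≠ 0 := by
    intro s hs h
    have := hs₀ s
    rw [h, norm_zero] at this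
    exact hs (sub_eq_zero.1 (abs_eq_zero.1
      (le_antisymm (nonpos_of_mul_nonpos_left this (norm_pos_iff.2 hη)) (abs_nonneg _))))
  set ψ : ℝ → ℝ := fun s => ⟪A (ξ + s • η), η⟫ with hψ
  have hψc : Continuous ψ := continuous_inner_comp_add_smul hp hF hA hA0
    (fun ζ hζ => (hAd ζ hζ).continuousAt) ξ η
  have hincr : ∀ {x y m' : ℝ}, x ≤ y →
      (∀ s ∈ Ioo x y, s ≠ s₀ → m' ≤ ⟪fderiv ℝ A (ξ + s • η) η, η⟫) → m' * (y - x) ≤ ψ y - ψ x :=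
    fun hxy hm' => mul_sub_le_sub_of_hasDerivAt_Ioo_of_ne hxy hψc.continuousOn
      (fun s _ hs => hasDerivAt_inner_comp_add_smul (hAd _ (hreg s hs))) hm'
  have hmono : MonotoneOn ψ (Icc 0 1) := fun x _ y _ hxy => by
    simpa using hincr hxy fun s _ hs => hAmono _ (hreg s hs) η
  have hgap := sub_mul_sub_le_of_hasDerivAt_of_monotoneOn
    (fun s _ => hasDerivAt_comp_add_smul hp hF hA hA0 ξ η s) hmono (ha.trans hab) hb
  have hψab : m * (b - a) ≤ ψ b - ψ a := hincr hab fun s hs h => hm s hs (hreg s h)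
  have hψ0a : ψ 0 ≤ ψ a := hmono ⟨le_rfl, zero_le_one⟩ ⟨ha, hab.trans hb⟩ ha
  simp only [hψ, zero_smul, add_zero, one_smul, sub_zero, one_mul] at hgap hψ0a
  nlinarith [sub_nonneg.2 hb]

theorem mul_rpow_le_bregman_of_two_le (hp : 2 ≤ p)
    (hF : ∀ (c : ℝ) (ζ : E), F (c • ζ) = |c| ^ p * F ζ)
    (hA : ∀ ζ, ζ ≠ 0 → HasGradientAt F (A ζ) ζ) (hA0 : A 0 = 0)
    (hAd : ∀ ζ, ζ ≠ 0 → DifferentiableAt ℝ A ζ) {Λ : ℝ} (hΛ : 0 ≤ Λ)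
    (hell : ∀ ζ, ζ ≠ 0 → ∀ v, Λ * ‖ζ‖ ^ (p - 2) * ‖v‖ ^ 2 ≤ ⟪fderiv ℝ A ζ v, v⟫) (ξ η : E) :
    Λ * 8 ^ (2 - p) / 16 * ‖η‖ ^ p ≤ F (ξ + η) - F ξ - ⟪A ξ, η⟫ := by
  rcases eq_or_ne η 0 with rfl | hη
  · simp [Real.zero_rpow (by linarith : p ≠ 0)]
  have hη' : 0 < ‖η‖ := norm_pos_iff.2 hη
  have hAmono : ∀ ζ, ζ ≠ 0 → ∀ v, 0 ≤ ⟪fderiv ℝ A ζ v, v⟫ :=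
    fun ζ hζ v => le_trans (by positivity) (hell ζ hζ v)
  obtain ⟨s₀, hs₀⟩ := exists_abs_sub_mul_norm_le_norm_add_smul ξ η
  set m := Λ * (‖η‖ / 8) ^ (p - 2) * ‖η‖ ^ 2 with hm_def
  have hm : m = Λ * 8 ^ (2 - p) * ‖η‖ ^ p := by
    rw [hm_def, Real.div_rpow hη'.le (by norm_num), Real.rpow_sub hη', Real.rpow_two,
      show (2 : ℝ) - p = -(p - 2) by ring, Real.rpow_neg (by norm_num)]
    field_simp
  have hfar : ∀ s, 1 / 8 ≤ |s - s₀| → ξ + s • η ≠ 0 → m ≤ ⟪fderiv ℝ A (ξ + s • η) η, η⟫ := by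
    intro s hs hs0
    refine le_trans ?_ (hell _ hs0 η)
    have : ‖η‖ / 8 ≤ ‖ξ + s • η‖ := by nlinarith [hs₀ s]
    rw [hm_def]
    gcongr
  have hgap : m / 16 ≤ F (ξ + η) - F ξ - ⟪A ξ, η⟫ := by
    have hm0 : 0 ≤ m := by positivity
    rcases le_or_gt s₀ (3 / 8) with hs | hs
    · have := mul_le_bregman_of_le_inner_fderiv (by linarith) hF hA hA0 hAd hAmono hη
        (a := 1 / 2) (b := 3 / 4) (by norm_num) (by norm_num) (by norm_num)
        fun s hs' => hfar s (le_abs.2 (Or.inl (by linarith [hs'.1])))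
      linarith
    · have := mul_le_bregman_of_le_inner_fderiv (by linarith) hF hA hA0 hAd hAmono hη
        (a := 0) (b := 1 / 4) le_rfl (by norm_num) (by norm_num)
        fun s hs' => hfar s (le_abs.2 (Or.inr (by linarith [hs'.2])))
      linarith
  rw [hm] at hgap
  linarith

theorem mul_rpow_le_bregman_of_lt_two (hp₁ : 1 < p) (hp₂ : p < 2)
    (hF : ∀ (c : ℝ) (ζ : E), F (c • ζ) = |c| ^ p * F ζ)
    (hA : ∀ ζ, ζ ≠ 0 → HasGradientAt F (A ζ) ζ) (hA0 : A 0 = 0)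
    (hAd : ∀ ζ, ζ ≠ 0 → DifferentiableAt ℝ A ζ) {Λ : ℝ} (hΛ : 0 ≤ Λ)
    (hell : ∀ ζ, ζ ≠ 0 → ∀ v, Λ * ‖ζ‖ ^ (p - 2) * ‖v‖ ^ 2 ≤ ⟪fderiv ℝ A ζ v, v⟫) (ξ η : E) :
    Λ / 4 * ‖η‖ ^ 2 * (‖ξ‖ + ‖η‖) ^ (p - 2) ≤ F (ξ + η) - F ξ - ⟪A ξ, η⟫ := by
  rcases eq_or_ne η 0 with rfl | hη
  · simp
  have hAmono : ∀ ζ, ζ ≠ 0 → ∀ v, 0 ≤ ⟪fderiv ℝ A ζ v, v⟫ :=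
    fun ζ hζ v => le_trans (by positivity) (hell ζ hζ v)
  have := mul_le_bregman_of_le_inner_fderiv hp₁ hF hA hA0 hAd hAmono hη
    (m := Λ * (‖ξ‖ + ‖η‖) ^ (p - 2) * ‖η‖ ^ 2) (a := 0) (b := 1 / 2) le_rfl (by norm_num)
    (by norm_num) fun s hs hs0 => by
      refine le_trans ?_ (hell _ hs0 η)
      have hnear : ‖ξ + s • η‖ ≤ ‖ξ‖ + ‖η‖ := by
        calc ‖ξ + s • η‖ ≤ ‖ξ‖ + |s| * ‖η‖ := by simpa [norm_smul] using norm_add_le ξ (s • η)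
          _ ≤ ‖ξ‖ + 1 * ‖η‖ := by
            gcongr
            exact abs_le.2 ⟨by linarith [hs.1], by linarith [hs.2]⟩
          _ = ‖ξ‖ + ‖η‖ := by ring
      gcongr _ * ?_ * _
      exact Real.rpow_le_rpow_of_nonpos (norm_pos_iff.2 hs0) hnear (by linarith)
  linarith

end Homogeneous

theorem stmt_10_general (n : ℕ) (p : ℝ) (hp : 1 < p)
    (H : EuclideanSpace ℝ (Fin n) → ℝ)
    (Hnonneg : ∀ ξ, 0 ≤ H ξ)
    (Hhom : ∀ (c : ℝ) (ξ : EuclideanSpace ℝ (Fin n)), H (c • ξ) = |c| * H ξ)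
    (Hdiff : ∀ ξ : EuclideanSpace ℝ (Fin n), ξ ≠ 0 → DifferentiableAt ℝ H ξ)
    -- the operator `A := ∇(H^p/p)`, with `A(0) := 0`:
    (A : EuclideanSpace ℝ (Fin n) → EuclideanSpace ℝ (Fin n))
    (hA : ∀ ξ, A ξ = if ξ = 0 then 0 else gradient (fun ζ => H ζ ^ p / p) ξ)
    -- `A` is continuously differentiable away from the origin:
    (hAdiff : ∀ ξ : EuclideanSpace ℝ (Fin n), ξ ≠ 0 → DifferentiableAt ℝ A ξ)
    (Λ₁ : ℝ) (hΛ₁ : 0 < Λ₁)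
    (hell : ∀ ξ : EuclideanSpace ℝ (Fin n), ξ ≠ 0 → ∀ η,
      Λ₁ * ‖ξ‖ ^ (p - 2) * ‖η‖ ^ 2 ≤ ⟪fderiv ℝ A ξ η, η⟫) :
    ∃ C : ℝ, 0 < C ∧
      (2 ≤ p → ∀ ξ η : EuclideanSpace ℝ (Fin n),
        H (ξ + η) ^ p - H ξ ^ p - p * ⟪A ξ, η⟫ ≥ C * ‖η‖ ^ p) ∧
      (p < 2 → ∀ ξ η : EuclideanSpace ℝ (Fin n), ¬(ξ = 0 ∧ η = 0) →
        H (ξ + η) ^ p - H ξ ^ p - p * ⟪A ξ, η⟫ ≥ C * ‖η‖ ^ 2 * (‖ξ‖ + ‖η‖) ^ (p - 2)) := by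
  set F : EuclideanSpace ℝ (Fin n) → ℝ := fun ζ => H ζ ^ p / p
  have hp₀ : 0 < p := by linarith
  have hF : ∀ (c : ℝ) ζ, F (c • ζ) = |c| ^ p * F ζ := fun c ζ => by
    simp only [F, Hhom, Real.mul_rpow (abs_nonneg c) (Hnonneg ζ), mul_div_assoc]
  have hgrad : ∀ ζ, ζ ≠ 0 → HasGradientAt F (A ζ) ζ := fun ζ hζ => by
    rw [hA ζ, if_neg hζ]
    have hFd : DifferentiableAt ℝ F ζ := by
      simpa only [F, div_eq_mul_inv] using ((Hdiff ζ hζ).rpow_const (Or.inr hp.le)).mul_const p⁻¹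
    exact hFd.hasGradientAt
  have hA0 : A 0 = 0 := by simp [hA]
  have hbregman : ∀ ξ η, H (ξ + η) ^ p - H ξ ^ p - p * ⟪A ξ, η⟫
      = p * (F (ξ + η) - F ξ - ⟪A ξ, η⟫) := fun ξ η => by
    simp only [F]
    field_simp
  refine ⟨if 2 ≤ p then p * (Λ₁ * 8 ^ (2 - p) / 16) else p * (Λ₁ / 4),
    by split_ifs <;> positivity, fun hp₂ ξ η => ?_, fun hp₂ ξ η _ => ?_⟩
  · rw [if_pos hp₂, hbregman]
    have := mul_rpow_le_bregman_of_two_le hp₂ hF hgrad hA0 hAdiff hΛ₁.le hell ξ η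
    linarith [mul_le_mul_of_nonneg_left this hp₀.le]
  · rw [if_neg hp₂.not_ge, hbregman]
    have := mul_rpow_le_bregman_of_lt_two hp hp₂ hF hgrad hA0 hAdiff hΛ₁.le hell ξ η
    linarith [mul_le_mul_of_nonneg_left this hp₀.le]

/-- Lower Bregman-distance bound for `H^p` under the
ellipticity/boundedness assumptions on the derivative of `A = ∇(H^p/p)`. -/
theorem stmt_10 (n : ℕ) (hn : 2 ≤ n) (p : ℝ) (hp : 1 < p)
    (H : EuclideanSpace ℝ (Fin n) → ℝ)
    (Hnonneg : ∀ ξ, 0 ≤ H ξ)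
    (Heq_zero : ∀ ξ, H ξ = 0 ↔ ξ = 0)
    (Hhom : ∀ (c : ℝ) (ξ : EuclideanSpace ℝ (Fin n)), H (c • ξ) = |c| * H ξ)
    (Htri : ∀ ξ η, H (ξ + η) ≤ H ξ + H η)
    (Hdiff : ∀ ξ : EuclideanSpace ℝ (Fin n), ξ ≠ 0 → DifferentiableAt ℝ H ξ)
    -- the operator `A := ∇(H^p/p)`, with `A(0) := 0`:
    (A : EuclideanSpace ℝ (Fin n) → EuclideanSpace ℝ (Fin n))
    (hA : ∀ ξ, A ξ = if ξ = 0 then 0 else gradient (fun ζ => H ζ ^ p / p) ξ)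
    -- `A` is continuously differentiable away from the origin:
    (hAdiff : ∀ ξ : EuclideanSpace ℝ (Fin n), ξ ≠ 0 → DifferentiableAt ℝ A ξ)
    (hAcont : ContinuousOn (fderiv ℝ A) {(0 : EuclideanSpace ℝ (Fin n))}ᶜ)
    (Λ₁ Λ₂ : ℝ) (hΛ₁ : 0 < Λ₁) (hΛ₂ : 0 < Λ₂)
    (hell : ∀ ξ : EuclideanSpace ℝ (Fin n), ξ ≠ 0 → ∀ η,
      Λ₁ * ‖ξ‖ ^ (p - 2) * ‖η‖ ^ 2 ≤ ⟪fderiv ℝ A ξ η, η⟫)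
    (hbdd : ∀ ξ : EuclideanSpace ℝ (Fin n), ξ ≠ 0 → ‖fderiv ℝ A ξ‖ ≤ Λ₂ * ‖ξ‖ ^ (p - 2)) :
    ∃ C : ℝ, 0 < C ∧
      (2 ≤ p → ∀ ξ η : EuclideanSpace ℝ (Fin n),
        H (ξ + η) ^ p - H ξ ^ p - p * ⟪A ξ, η⟫ ≥ C * ‖η‖ ^ p) ∧
      (p < 2 → ∀ ξ η : EuclideanSpace ℝ (Fin n), ¬(ξ = 0 ∧ η = 0) →
        H (ξ + η) ^ p - H ξ ^ p - p * ⟪A ξ, η⟫ ≥ C * ‖η‖ ^ 2 * (‖ξ‖ + ‖η‖) ^ (p - 2)) :=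
  stmt_10_general n p hp H Hnonneg Hhom Hdiff A hA hAdiff Λ₁ hΛ₁ hell
end

section
/- Let N : ℝⁿ → ℝ be a norm that is differentiable on ℝⁿ\{0}. Then the vector field v(y) := N(y)^{−n}·y is differentiable on ℝⁿ\{0}, and its divergence vanishes there: for every x ∈ ℝⁿ\{0}, ∑_{i=1}^n ∂ᵢ( N(·)^{−n}·(·)ᵢ )(x) = 0. -/
/-! `N ^ (-n)` is positively homogeneous of degree `-n`, so by Euler's identity its derivative
in the radial direction is `D(N ^ (-n))(x) x = -n N(x) ^ (-n)`. For any scalar `g`, the divergence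
of `g(y) y` in `ℝⁿ` is `n g(x) + Dg(x) x`, which here is `n N(x) ^ (-n) - n N(x) ^ (-n) = 0`. -/

open Real

theorem HasFDerivAt.apply_self_of_homogeneous {E : Type*} [NormedAddCommGroup E]
    [NormedSpace ℝ E] {f : E → ℝ} {f' : E →L[ℝ] ℝ} {x : E} {c : ℝ}
    (hhom : ∀ t : ℝ, 0 < t → f (t • x) = t ^ c * f x) (hf : HasFDerivAt f f' x) :
    f' x = c * f x := by
  have hray : HasDerivAt (fun t : ℝ => f (t • x)) (f' x) 1 := by
    have hline : HasDerivAt (fun t : ℝ => t • x) x 1 := by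
      simpa using (hasDerivAt_id (1 : ℝ)).smul_const x
    exact (one_smul ℝ x ▸ hf).comp_hasDerivAt 1 hline
  have hpow : HasDerivAt (fun t : ℝ => t ^ c * f x) (c * f x) 1 := by
    simpa using (hasDerivAt_rpow_const (p := c) (Or.inl one_ne_zero)).mul_const (f x)
  have heq : (fun t : ℝ => f (t • x)) =ᶠ[nhds 1] fun t => t ^ c * f x := by
    filter_upwards [eventually_gt_nhds one_pos] with t ht using hhom t ht
  exact hray.unique (hpow.congr_of_eventuallyEq heq)

theorem sum_fderiv_mul_apply_single {ι : Type*} [Fintype ι] [DecidableEq ι]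
    {g : EuclideanSpace ℝ ι → ℝ} {x : EuclideanSpace ℝ ι} (hg : DifferentiableAt ℝ g x) :
    ∑ i, fderiv ℝ (fun y : EuclideanSpace ℝ ι => g y * y i) x (EuclideanSpace.single i 1)
      = Fintype.card ι * g x + fderiv ℝ g x x := by
  have hcoord (i : ι) :
      fderiv ℝ (fun y : EuclideanSpace ℝ ι => g y * y i) x (EuclideanSpace.single i 1)
        = g x + x i * fderiv ℝ g x (EuclideanSpace.single i 1) := by
    have hprod : HasFDerivAt (fun y : EuclideanSpace ℝ ι => g y * y i)
        (g x • EuclideanSpace.proj i + x i • fderiv ℝ g x) x :=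
      hg.hasFDerivAt.mul (EuclideanSpace.proj (𝕜 := ℝ) i).hasFDerivAt
    rw [hprod.fderiv]
    simp
  have hexpand : ∑ i, x i • (EuclideanSpace.single i 1 : EuclideanSpace ℝ ι) = x := by
    simpa [EuclideanSpace.basisFun_apply] using (EuclideanSpace.basisFun ι ℝ).sum_repr x
  calc ∑ i, fderiv ℝ (fun y : EuclideanSpace ℝ ι => g y * y i) x (EuclideanSpace.single i 1)
      = ∑ _i : ι, g x + fderiv ℝ g x (∑ i, x i • EuclideanSpace.single i 1) := by
        simp only [hcoord, Finset.sum_add_distrib, map_sum, map_smul, smul_eq_mul]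
    _ = Fintype.card ι * g x + fderiv ℝ g x x := by
        rw [hexpand, Finset.sum_const, Finset.card_univ, nsmul_eq_mul]

theorem stmt_11_general (n : ℕ)
    (N : EuclideanSpace ℝ (Fin n) → ℝ)
    (Nnonneg : ∀ ξ, 0 ≤ N ξ)
    (Neq_zero : ∀ ξ, N ξ = 0 ↔ ξ = 0)
    (Nhom : ∀ (c : ℝ) (ξ : EuclideanSpace ℝ (Fin n)), N (c • ξ) = |c| * N ξ)
    (Ndiff : ∀ ξ : EuclideanSpace ℝ (Fin n), ξ ≠ 0 → DifferentiableAt ℝ N ξ) :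
    ∀ x : EuclideanSpace ℝ (Fin n), x ≠ 0 →
      DifferentiableAt ℝ (fun y : EuclideanSpace ℝ (Fin n) => N y ^ (-(n : ℝ)) • y) x ∧
      ∑ i, fderiv ℝ (fun y : EuclideanSpace ℝ (Fin n) => N y ^ (-(n : ℝ)) * y i) x
          (EuclideanSpace.single i 1) = 0 := by
  intro x hx
  have hNx : N x ≠ 0 := fun h => hx ((Neq_zero x).mp h)
  have hdiff : DifferentiableAt ℝ (fun y => N y ^ (-(n : ℝ))) x :=
    (Ndiff x hx).rpow_const (Or.inl hNx)
  have hhom (t : ℝ) (ht : 0 < t) : N (t • x) ^ (-(n : ℝ)) = t ^ (-(n : ℝ)) * N x ^ (-(n : ℝ)) := by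
    rw [Nhom, abs_of_pos ht, mul_rpow ht.le (Nnonneg x)]
  refine ⟨hdiff.smul differentiableAt_id, ?_⟩
  rw [sum_fderiv_mul_apply_single hdiff, hdiff.hasFDerivAt.apply_self_of_homogeneous hhom,
    Fintype.card_fin]
  ring

/-- For a norm `N` on `ℝⁿ` differentiable off the origin, the
vector field `v(y) := N(y)^{−n} y` is differentiable off the origin and
divergence-free there. -/
theorem stmt_11 (n : ℕ) (hn : 2 ≤ n)
    (N : EuclideanSpace ℝ (Fin n) → ℝ)
    (Nnonneg : ∀ ξ, 0 ≤ N ξ)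
    (Neq_zero : ∀ ξ, N ξ = 0 ↔ ξ = 0)
    (Nhom : ∀ (c : ℝ) (ξ : EuclideanSpace ℝ (Fin n)), N (c • ξ) = |c| * N ξ)
    (Ntri : ∀ ξ η, N (ξ + η) ≤ N ξ + N η)
    (Ndiff : ∀ ξ : EuclideanSpace ℝ (Fin n), ξ ≠ 0 → DifferentiableAt ℝ N ξ) :
    ∀ x : EuclideanSpace ℝ (Fin n), x ≠ 0 →
      DifferentiableAt ℝ (fun y : EuclideanSpace ℝ (Fin n) => N y ^ (-(n : ℝ)) • y) x ∧
      ∑ i, fderiv ℝ (fun y : EuclideanSpace ℝ (Fin n) => N y ^ (-(n : ℝ)) * y i) x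
          (EuclideanSpace.single i 1) = 0 :=
  stmt_11_general n N Nnonneg Neq_zero Nhom Ndiff
end

section
/- Let 1 < p < ∞ with p ≠ n. Let H be a norm on ℝⁿ differentiable on ℝⁿ\{0}, let H₀(x) := sup_{ξ ≠ 0} ⟪x, ξ⟫ / H(ξ) denote its dual norm, and assume H₀ is differentiable on ℝⁿ\{0}. Define G(x) := H₀(x)^{(p−n)/(p−1)} for x ≠ 0 and A(ξ) := ∇(H^p/p)(ξ) for ξ ≠ 0. Then for every x ∈ ℝⁿ\{0}, ∇G(x) ≠ 0 and A(∇G(x)) = ((p−n)/(p−1)) · |(p−n)/(p−1)|^{p−2} · H₀(x)^{−n} · x. -/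
/-!
`H₀` is positively homogeneous and subadditive, so its gradient `ξ₀` at `x ≠ 0` satisfies
`⟪ξ₀, x⟫ = H₀ x` and `⟪ξ₀, ·⟫ ≤ H₀`; together with the same two facts for `H` at `ξ₀` this
forces `H ξ₀ = 1`. Young's inequality then shows that `ξ₀` minimises `H^p/p - ⟪x / H₀ x, ·⟫`,
so `A ξ₀ = x / H₀ x`. Finally `∇G x = α H₀(x)^(α-1) ξ₀` with `α = (p-n)/(p-1) ≠ 0`, and
`A (c ξ) = |c|^p c⁻¹ A ξ` by homogeneity of `H^p/p`.
-/

open RealInnerProductSpace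

theorem Real.one_div_sub_one_le_rpow_div_sub {p a : ℝ} (hp : 1 < p) (ha : 0 ≤ a) :
    1 / p - 1 ≤ a ^ p / p - a := by
  have hq := Real.HolderConjugate.conjExponent hp
  have hyoung := Real.young_inequality_of_nonneg ha zero_le_one hq
  rw [Real.one_rpow, mul_one, one_div p.conjExponent] at hyoung
  linarith [hq.inv_add_inv_eq_one, one_div p]

theorem abs_rpow_div_self {c : ℝ} (hc : c ≠ 0) (p : ℝ) : |c| ^ p / c = c * |c| ^ (p - 2) := by
  have h : |c| ^ p = |c| ^ (p - 2) * c ^ 2 := by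
    rw [← sq_abs, ← Real.rpow_natCast, ← Real.rpow_add (abs_pos.mpr hc)]
    norm_num
  rw [h]
  field_simp

theorem abs_rpow_div_self_mul_inv {p n t : ℝ} (hp : p ≠ 1) (ht : 0 < t) :
    |(p - n) / (p - 1) * t ^ ((p - n) / (p - 1) - 1)| ^ p /
        ((p - n) / (p - 1) * t ^ ((p - n) / (p - 1) - 1)) * t⁻¹
      = (p - n) / (p - 1) * |(p - n) / (p - 1)| ^ (p - 2) * t ^ (-n) := by
  set α := (p - n) / (p - 1) with hα
  rcases eq_or_ne α 0 with hα0 | hα0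
  · simp [hα0]
  have htα : 0 < t ^ (α - 1) := Real.rpow_pos_of_pos ht _
  have hexp : (α - 1) + (α - 1) * (p - 2) + -1 = -n := by
    rw [hα]
    field_simp [sub_ne_zero.mpr hp]
    ring
  rw [abs_rpow_div_self (mul_ne_zero hα0 htα.ne'), abs_mul, abs_of_pos htα,
    Real.mul_rpow (abs_nonneg α) htα.le, ← Real.rpow_mul ht.le, ← Real.rpow_neg_one t,
    ← hexp, Real.rpow_add ht, Real.rpow_add ht]
  ring

section Gradient

variable {E : Type*} [NormedAddCommGroup E] [InnerProductSpace ℝ E] [CompleteSpace E]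
  {f : E → ℝ} {g w x ξ : E}

theorem ConvexOn.inner_gradient_le_sub (hf : ConvexOn ℝ Set.univ f) (hg : HasGradientAt f g x)
    (y : E) : ⟪g, y - x⟫ ≤ f y - f x := by
  set ℓ : ℝ →ᵃ[ℝ] E := AffineMap.lineMap x y
  have hline : ConvexOn ℝ Set.univ (f ∘ ℓ) := by simpa using hf.comp_affineMap ℓ
  have hderiv : HasDerivAt (f ∘ ℓ) ⟪g, y - x⟫ 0 := by
    have := hg.hasFDerivAt
    rw [← AffineMap.lineMap_apply_zero x y (k := ℝ)] at this
    exact this.comp_hasDerivAt 0 AffineMap.hasDerivAt_lineMap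
  simpa [slope_def_field, ℓ] using
    hline.le_slope_of_hasDerivAt (Set.mem_univ 0) (Set.mem_univ 1) one_pos hderiv

theorem hasGradientAt_of_forall_sub_inner_le (hf : DifferentiableAt ℝ f ξ)
    (hmin : ∀ ζ, f ξ - ⟪w, ξ⟫ ≤ f ζ - ⟪w, ζ⟫) : HasGradientAt f w ξ := by
  have hΦ : HasFDerivAt (fun ζ => f ζ - ⟪w, ζ⟫)
      (fderiv ℝ f ξ - InnerProductSpace.toDual ℝ E w) ξ :=
    hf.hasFDerivAt.sub (InnerProductSpace.toDual ℝ E w).hasFDerivAt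
  have hlocal : IsLocalMin (fun ζ => f ζ - ⟪w, ζ⟫) ξ := Filter.Eventually.of_forall hmin
  have hzero := hlocal.hasFDerivAt_eq_zero hΦ
  rw [hasGradientAt_iff_hasFDerivAt, ← sub_eq_zero.mp hzero]
  exact hf.hasFDerivAt

theorem HasGradientAt.rpow_const {a : ℝ} (hg : HasGradientAt f g x) (hx : f x ≠ 0) :
    HasGradientAt (fun y => f y ^ a) ((a * f x ^ (a - 1)) • g) x := by
  rw [hasGradientAt_iff_hasFDerivAt, map_smul]
  exact hg.hasFDerivAt.rpow_const (Or.inl hx)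

theorem HasGradientAt.smul_of_map_smul {c k : ℝ} (hc : c ≠ 0)
    (hf : ∀ ζ, f (c • ζ) = k * f ζ) (hg : HasGradientAt f g ξ) :
    HasGradientAt f ((k / c) • g) (c • ξ) := by
  have hf' : f = fun ζ => k * f (c⁻¹ • ζ) := funext fun ζ => by rw [← hf, smul_inv_smul₀ hc]
  have hscale : HasFDerivAt (fun ζ : E => c⁻¹ • ζ) (c⁻¹ • ContinuousLinearMap.id ℝ E) (c • ξ) :=
    (hasFDerivAt_id _).const_smul c⁻¹
  rw [← inv_smul_smul₀ hc ξ] at hg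
  have := (hg.hasFDerivAt.comp (c • ξ) hscale).const_mul k
  rw [hasGradientAt_iff_hasFDerivAt, hf']
  refine this.congr_fderiv (ContinuousLinearMap.ext fun u => ?_)
  simp only [FunLike.coe_smul, Pi.smul_apply, ContinuousLinearMap.comp_apply,
    ContinuousLinearMap.id_apply, InnerProductSpace.toDual_apply_apply, real_inner_smul_left,
    real_inner_smul_right, smul_eq_mul]
  ring

end Gradient

theorem convexOn_univ_of_subadditive_of_smul {E : Type*} [AddCommGroup E] [Module ℝ E]
    {N : E → ℝ} (hadd : ∀ x y, N (x + y) ≤ N x + N y)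
    (hsmul : ∀ a : ℝ, 0 ≤ a → ∀ x, N (a • x) = a * N x) : ConvexOn ℝ Set.univ N := by
  refine ⟨convex_univ, fun x _ y _ a b ha hb _ => ?_⟩
  calc N (a • x + b • y) ≤ N (a • x) + N (b • y) := hadd _ _
    _ = a • N x + b • N y := by rw [hsmul a ha, hsmul b hb, smul_eq_mul, smul_eq_mul]

section Sublinear

variable {E : Type*} [NormedAddCommGroup E] [InnerProductSpace ℝ E] [CompleteSpace E]
  {N : E → ℝ} {g x : E}

theorem HasGradientAt.inner_self_eq_of_sublinear (hadd : ∀ x y, N (x + y) ≤ N x + N y)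
    (hsmul : ∀ a : ℝ, 0 ≤ a → ∀ x, N (a • x) = a * N x) (hg : HasGradientAt N g x) :
    ⟪g, x⟫ = N x := by
  have hconv := convexOn_univ_of_subadditive_of_smul hadd hsmul
  have h₀ := hconv.inner_gradient_le_sub hg 0
  have h₂ := hconv.inner_gradient_le_sub hg ((2 : ℝ) • x)
  rw [zero_sub, inner_neg_right, ← zero_smul ℝ x, hsmul 0 le_rfl] at h₀
  rw [two_smul, add_sub_cancel_right, ← two_smul ℝ x, hsmul 2 zero_le_two] at h₂
  linarith

theorem HasGradientAt.inner_le_of_sublinear (hadd : ∀ x y, N (x + y) ≤ N x + N y)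
    (hsmul : ∀ a : ℝ, 0 ≤ a → ∀ x, N (a • x) = a * N x) (hg : HasGradientAt N g x) (ζ : E) :
    ⟪g, ζ⟫ ≤ N ζ := by
  have h := (convexOn_univ_of_subadditive_of_smul hadd hsmul).inner_gradient_le_sub hg (x + ζ)
  rw [add_sub_cancel_left] at h
  linarith [hadd x ζ]

end Sublinear

structure IsNorm {E : Type*} [AddCommGroup E] [Module ℝ E] (H : E → ℝ) : Prop where
  nonneg : ∀ ξ, 0 ≤ H ξ
  eq_zero_iff : ∀ ξ, H ξ = 0 ↔ ξ = 0
  smul : ∀ (c : ℝ) ξ, H (c • ξ) = |c| * H ξ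
  add_le : ∀ ξ η, H (ξ + η) ≤ H ξ + H η

noncomputable def dualNorm {E : Type*} [NormedAddCommGroup E] [InnerProductSpace ℝ E]
    (H : E → ℝ) (x : E) : ℝ :=
  ⨆ ξ : {ζ : E // ζ ≠ 0}, ⟪x, (ξ : E)⟫ / H ξ

section DualNorm

variable {E : Type*} [NormedAddCommGroup E] [InnerProductSpace ℝ E] {H : E → ℝ} {x ξ : E}

theorem dualNorm_smul_of_nonneg (a : ℝ) (ha : 0 ≤ a) (x : E) :
    dualNorm H (a • x) = a * dualNorm H x := by
  simp only [dualNorm, Real.mul_iSup_of_nonneg ha, real_inner_smul_left, mul_div_assoc]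

namespace IsNorm

theorem pos (hH : IsNorm H) (hξ : ξ ≠ 0) : 0 < H ξ :=
  (hH.nonneg ξ).lt_of_ne' (mt (hH.eq_zero_iff ξ).1 hξ)

theorem smul_of_nonneg (hH : IsNorm H) (a : ℝ) (ha : 0 ≤ a) (ξ : E) : H (a • ξ) = a * H ξ := by
  rw [hH.smul, abs_of_nonneg ha]

theorem rpow_div_smul (hH : IsNorm H) (p c : ℝ) (ξ : E) :
    H (c • ξ) ^ p / p = |c| ^ p * (H ξ ^ p / p) := by
  rw [hH.smul, Real.mul_rpow (abs_nonneg c) (hH.nonneg ξ), mul_div_assoc]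

theorem continuous [FiniteDimensional ℝ E] (hH : IsNorm H) : Continuous H :=
  continuousOn_univ.mp <| (convexOn_univ_of_subadditive_of_smul hH.add_le
    hH.smul_of_nonneg).continuousOn isOpen_univ

theorem exists_pos_mul_norm_le [FiniteDimensional ℝ E] [Nontrivial E] (hH : IsNorm H) :
    ∃ c > 0, ∀ ξ, c * ‖ξ‖ ≤ H ξ := by
  obtain ⟨ξ₁, hξ₁, hmin⟩ := (isCompact_sphere (0 : E) 1).exists_isMinOn
    (NormedSpace.sphere_nonempty.mpr zero_le_one) hH.continuous.continuousOn
  have hξ₁ : ‖ξ₁‖ = 1 := mem_sphere_zero_iff_norm.mp hξ₁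
  refine ⟨H ξ₁, hH.pos (norm_ne_zero_iff.mp (by rw [hξ₁]; exact one_ne_zero)), fun ξ => ?_⟩
  rcases eq_or_ne ξ 0 with rfl | hξ
  · simpa using hH.nonneg 0
  have hnorm : 0 < ‖ξ‖ := norm_pos_iff.mpr hξ
  have h : H ξ₁ ≤ H (‖ξ‖⁻¹ • ξ) := hmin (by simp [norm_smul, hnorm.ne'])
  rw [hH.smul_of_nonneg _ (inv_nonneg.mpr hnorm.le)] at h
  calc H ξ₁ * ‖ξ‖ ≤ ‖ξ‖⁻¹ * H ξ * ‖ξ‖ := by gcongr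
    _ = H ξ := by field_simp

theorem bddAbove_range_inner_div [FiniteDimensional ℝ E] [Nontrivial E] (hH : IsNorm H)
    (x : E) : BddAbove (Set.range fun ξ : {ζ : E // ζ ≠ 0} => ⟪x, (ξ : E)⟫ / H ξ) := by
  obtain ⟨c, hc, hlow⟩ := hH.exists_pos_mul_norm_le
  refine ⟨‖x‖ / c, ?_⟩
  rintro - ⟨⟨ξ, hξ⟩, rfl⟩
  rw [div_le_div_iff₀ (hH.pos hξ) hc]
  calc ⟪x, ξ⟫ * c ≤ ‖x‖ * ‖ξ‖ * c := by gcongr; exact real_inner_le_norm x ξ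
    _ ≤ ‖x‖ * H ξ := by rw [mul_assoc, mul_comm ‖ξ‖]; gcongr; exact hlow ξ

theorem inner_le_dualNorm_mul [FiniteDimensional ℝ E] [Nontrivial E] (hH : IsNorm H)
    (x ξ : E) : ⟪x, ξ⟫ ≤ dualNorm H x * H ξ := by
  rcases eq_or_ne ξ 0 with rfl | hξ
  · simp [(hH.eq_zero_iff 0).mpr rfl]
  rw [← div_le_iff₀ (hH.pos hξ)]
  exact le_ciSup (hH.bddAbove_range_inner_div x) (⟨ξ, hξ⟩ : {ζ : E // ζ ≠ 0})

theorem dualNorm_le [Nontrivial E] (hH : IsNorm H) {M : ℝ} (hM : ∀ ξ, ⟪x, ξ⟫ ≤ M * H ξ) :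
    dualNorm H x ≤ M :=
  have : Nonempty {ζ : E // ζ ≠ 0} := let ⟨ζ, hζ⟩ := exists_ne (0 : E); ⟨⟨ζ, hζ⟩⟩
  ciSup_le fun ξ => (div_le_iff₀ (hH.pos ξ.2)).mpr (hM ξ)

theorem dualNorm_add_le [FiniteDimensional ℝ E] [Nontrivial E] (hH : IsNorm H) (x y : E) :
    dualNorm H (x + y) ≤ dualNorm H x + dualNorm H y :=
  hH.dualNorm_le fun ξ => by
    rw [inner_add_left, add_mul]
    exact add_le_add (hH.inner_le_dualNorm_mul x ξ) (hH.inner_le_dualNorm_mul y ξ)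

theorem dualNorm_pos [FiniteDimensional ℝ E] [Nontrivial E] (hH : IsNorm H) (hx : x ≠ 0) :
    0 < dualNorm H x := by
  have h := hH.inner_le_dualNorm_mul x x
  rw [real_inner_self_eq_norm_sq] at h
  exact pos_of_mul_pos_left ((pow_pos (norm_pos_iff.mpr hx) 2).trans_le h) (hH.nonneg x)

end IsNorm

end DualNorm

namespace IsNorm

variable {E : Type*} [NormedAddCommGroup E] [InnerProductSpace ℝ E] [FiniteDimensional ℝ E]
  [Nontrivial E] {H : E → ℝ} {g x : E}

theorem inner_gradient_dualNorm_self (hH : IsNorm H) (hg : HasGradientAt (dualNorm H) g x) :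
    ⟪g, x⟫ = dualNorm H x :=
  hg.inner_self_eq_of_sublinear hH.dualNorm_add_le dualNorm_smul_of_nonneg

theorem apply_gradient_dualNorm_eq_one (hH : IsNorm H) (hx : x ≠ 0)
    (hg : HasGradientAt (dualNorm H) g x) (hHg : DifferentiableAt ℝ H g) : H g = 1 := by
  have hη := hHg.hasGradientAt
  have hηg : ⟪gradient H g, g⟫ = H g := hη.inner_self_eq_of_sublinear hH.add_le hH.smul_of_nonneg
  have hdualη : dualNorm H (gradient H g) ≤ 1 :=
    hH.dualNorm_le fun ζ => by simpa using hη.inner_le_of_sublinear hH.add_le hH.smul_of_nonneg ζ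
  have hgη : ⟪g, gradient H g⟫ ≤ dualNorm H (gradient H g) :=
    hg.inner_le_of_sublinear hH.dualNorm_add_le dualNorm_smul_of_nonneg _
  have hxg : dualNorm H x ≤ dualNorm H x * H g := by
    simpa [real_inner_comm, hH.inner_gradient_dualNorm_self hg] using hH.inner_le_dualNorm_mul x g
  rw [real_inner_comm] at hηg
  have := (le_mul_iff_one_le_right (hH.dualNorm_pos hx)).mp hxg
  linarith

theorem ne_zero_of_hasGradientAt_dualNorm (hH : IsNorm H) (hx : x ≠ 0)
    (hg : HasGradientAt (dualNorm H) g x) : g ≠ 0 := by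
  rintro rfl
  have h := hH.inner_gradient_dualNorm_self hg
  rw [inner_zero_left] at h
  exact (hH.dualNorm_pos hx).ne h

theorem hasGradientAt_rpow_div_of_hasGradientAt_dualNorm (hH : IsNorm H) {p : ℝ} (hp : 1 < p)
    (hx : x ≠ 0) (hg : HasGradientAt (dualNorm H) g x) (hHg : DifferentiableAt ℝ H g) :
    HasGradientAt (fun ξ => H ξ ^ p / p) ((dualNorm H x)⁻¹ • x) g := by
  have hHg1 := hH.apply_gradient_dualNorm_eq_one hx hg hHg
  have hpos := hH.dualNorm_pos hx
  have hdiff : DifferentiableAt ℝ (fun ξ => H ξ ^ p / p) g := by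
    simpa only [div_eq_mul_inv] using
      (hHg.rpow_const (Or.inl (by rw [hHg1]; exact one_ne_zero))).mul_const p⁻¹
  refine hasGradientAt_of_forall_sub_inner_le hdiff fun ζ => ?_
  have hxg : ⟪(dualNorm H x)⁻¹ • x, g⟫ = 1 := by
    rw [real_inner_smul_left, real_inner_comm, hH.inner_gradient_dualNorm_self hg,
      inv_mul_cancel₀ hpos.ne']
  have hxζ : ⟪(dualNorm H x)⁻¹ • x, ζ⟫ ≤ H ζ := by
    rw [real_inner_smul_left, inv_mul_le_iff₀ hpos]
    exact hH.inner_le_dualNorm_mul x ζ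
  rw [hHg1, hxg, Real.one_rpow]
  linarith [Real.one_div_sub_one_le_rpow_div_sub hp (hH.nonneg ζ)]

end IsNorm

theorem stmt_12_general (n : ℕ) (p : ℝ) (hp : 1 < p) (hpn : p ≠ n)
    (H : EuclideanSpace ℝ (Fin n) → ℝ)
    (Hnonneg : ∀ ξ, 0 ≤ H ξ)
    (Heq_zero : ∀ ξ, H ξ = 0 ↔ ξ = 0)
    (Hhom : ∀ (c : ℝ) (ξ : EuclideanSpace ℝ (Fin n)), H (c • ξ) = |c| * H ξ)
    (Htri : ∀ ξ η, H (ξ + η) ≤ H ξ + H η)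
    (Hdiff : ∀ ξ : EuclideanSpace ℝ (Fin n), ξ ≠ 0 → DifferentiableAt ℝ H ξ)
    -- the dual norm `H₀` and the function `G`:
    (H₀ : EuclideanSpace ℝ (Fin n) → ℝ)
    (hH₀ : ∀ x, H₀ x = ⨆ ξ : {ζ : EuclideanSpace ℝ (Fin n) // ζ ≠ 0}, ⟪x, (ξ : EuclideanSpace ℝ (Fin n))⟫ / H ξ)
    (hH₀diff : ∀ x : EuclideanSpace ℝ (Fin n), x ≠ 0 → DifferentiableAt ℝ H₀ x)
    (G : EuclideanSpace ℝ (Fin n) → ℝ)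
    (hG : ∀ x, G x = H₀ x ^ ((p - n) / (p - 1))) :
    ∀ x : EuclideanSpace ℝ (Fin n), x ≠ 0 →
      gradient G x ≠ 0 ∧
      gradient (fun ζ => H ζ ^ p / p) (gradient G x)
        = (((p - n) / (p - 1)) * |(p - n) / (p - 1)| ^ (p - 2) * H₀ x ^ (-(n : ℝ))) • x := by
  intro x hx
  have : Nontrivial (EuclideanSpace ℝ (Fin n)) := nontrivial_of_ne x 0 hx
  have hH : IsNorm H := ⟨Hnonneg, Heq_zero, Hhom, Htri⟩
  obtain rfl : H₀ = dualNorm H := funext hH₀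
  obtain rfl : G = fun y => dualNorm H y ^ ((p - n) / (p - 1)) := funext hG
  set ξ₀ := gradient (dualNorm H) x
  have hξ₀ : HasGradientAt (dualNorm H) ξ₀ x := (hH₀diff x hx).hasGradientAt
  have hξ₀ne : ξ₀ ≠ 0 := hH.ne_zero_of_hasGradientAt_dualNorm hx hξ₀
  set c := (p - n) / (p - 1) * dualNorm H x ^ ((p - n) / (p - 1) - 1)
  have hc : c ≠ 0 := mul_ne_zero (div_ne_zero (sub_ne_zero.mpr hpn) (sub_ne_zero.mpr hp.ne'))
    (Real.rpow_pos_of_pos (hH.dualNorm_pos hx) _).ne'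
  have hGx := (hξ₀.rpow_const (hH.dualNorm_pos hx).ne' (a := (p - n) / (p - 1))).gradient
  have hA := (hH.hasGradientAt_rpow_div_of_hasGradientAt_dualNorm hp hx hξ₀
    (Hdiff ξ₀ hξ₀ne)).smul_of_map_smul hc (hH.rpow_div_smul p c)
  rw [hGx, hA.gradient, smul_smul, abs_rpow_div_self_mul_inv hp.ne' (hH.dualNorm_pos hx)]
  exact ⟨smul_ne_zero hc hξ₀ne, rfl⟩

/-- With `G(x) := H₀(x)^{(p−n)/(p−1)}` (`H₀` the dual norm of
`H`, `p ≠ n`), one has `∇G(x) ≠ 0` and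
`A(∇G(x)) = ((p−n)/(p−1))|(p−n)/(p−1)|^{p−2} H₀(x)^{−n} x` for `x ≠ 0`. -/
theorem stmt_12 (n : ℕ) (hn : 2 ≤ n) (p : ℝ) (hp : 1 < p) (hpn : p ≠ n)
    (H : EuclideanSpace ℝ (Fin n) → ℝ)
    (Hnonneg : ∀ ξ, 0 ≤ H ξ)
    (Heq_zero : ∀ ξ, H ξ = 0 ↔ ξ = 0)
    (Hhom : ∀ (c : ℝ) (ξ : EuclideanSpace ℝ (Fin n)), H (c • ξ) = |c| * H ξ)
    (Htri : ∀ ξ η, H (ξ + η) ≤ H ξ + H η)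
    (Hdiff : ∀ ξ : EuclideanSpace ℝ (Fin n), ξ ≠ 0 → DifferentiableAt ℝ H ξ)
    -- the dual norm `H₀` and the function `G`:
    (H₀ : EuclideanSpace ℝ (Fin n) → ℝ)
    (hH₀ : ∀ x, H₀ x = ⨆ ξ : {ζ : EuclideanSpace ℝ (Fin n) // ζ ≠ 0}, ⟪x, (ξ : EuclideanSpace ℝ (Fin n))⟫ / H ξ)
    (hH₀diff : ∀ x : EuclideanSpace ℝ (Fin n), x ≠ 0 → DifferentiableAt ℝ H₀ x)
    (G : EuclideanSpace ℝ (Fin n) → ℝ)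
    (hG : ∀ x, G x = H₀ x ^ ((p - n) / (p - 1))) :
    ∀ x : EuclideanSpace ℝ (Fin n), x ≠ 0 →
      gradient G x ≠ 0 ∧
      gradient (fun ζ => H ζ ^ p / p) (gradient G x)
        = (((p - n) / (p - 1)) * |(p - n) / (p - 1)| ^ (p - 2) * H₀ x ^ (-(n : ℝ))) • x :=
  stmt_12_general n p hp hpn H Hnonneg Heq_zero Hhom Htri Hdiff H₀ hH₀ hH₀diff G hG
end
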